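/- arXiv:1708.08207 — 2 statements merged into one kernel-verified Lean document; each statement's English description precedes it below -/
import Mathlib

section
/- For m, n ≥ 4, the M-polynomial of the line graph of the generalized Möbius ladder is M(L(M_{m,n}); x, y) = 2(m−1)x⁴y⁴ + 4(m−1)x⁴y⁵ + 6(m−1)x⁵y⁶ + 6(m−1)(n−3)x⁶y⁶. -/
/-- Directed base relation for the generalized Möbius ladder `M_{m,n}`:
columns are indexed by `ZMod (m-1)` (the end columns of the grid `P_m × P_n`
are identified with a half twist), rows by `Fin n`. -/
def gmlRel (m n : ℕ) (v w : ZMod (m - 1) × Fin n) : Prop :=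
  -- vertical edge within a column
  (v.1 = w.1 ∧ v.2.val + 1 = w.2.val) ∨
  -- ordinary horizontal edge to the next column
  (v.1 ≠ ((m - 2 : ℕ) : ZMod (m - 1)) ∧ w.1 = v.1 + 1 ∧ v.2 = w.2) ∨
  -- twisted horizontal edge from the last column back to the first
  (v.1 = ((m - 2 : ℕ) : ZMod (m - 1)) ∧ w.1 = 0 ∧ v.2.val + w.2.val = n - 1)

/-- The generalized Möbius ladder `M_{m,n}`. -/
def GML (m n : ℕ) : SimpleGraph (ZMod (m - 1) × Fin n) :=
  SimpleGraph.fromRel (gmlRel m n)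

/-- Degree of a vertex, defined via `Set.ncard` so that no `Fintype`
instances are needed. -/
noncomputable def ndeg {V : Type*} (G : SimpleGraph V) (v : V) : ℕ :=
  (G.neighborSet v).ncard

open MvPolynomial in
/-- The `M`-polynomial of a graph `G`:  `M(G;x,y) = ∑_{i ≤ j} m_{ij} x^i y^j`,
where `m_{ij}` is the number of edges whose endpoint degrees are `i` and `j`. -/
noncomputable def MPoly {V : Type*} (G : SimpleGraph V) : MvPolynomial (Fin 2) ℤ :=
  ∑ᶠ e ∈ G.edgeSet,
    Sym2.lift ⟨fun u v =>
      (X 0 : MvPolynomial (Fin 2) ℤ) ^ (min (ndeg G u) (ndeg G v)) *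
        (X 1 : MvPolynomial (Fin 2) ℤ) ^ (max (ndeg G u) (ndeg G v)),
      fun u v => by simp only []; rw [min_comm, max_comm]⟩ e

namespace GMLAux

open SimpleGraph MvPolynomial

variable {m n : ℕ}

abbrev V (m n : ℕ) := ZMod (m - 1) × Fin n

def rev {n : ℕ} (r : Fin n) : Fin n := ⟨n - 1 - r.1, by have := r.2; omega⟩

def hrow (m : ℕ) {n : ℕ} (c : ZMod (m - 1)) (r : Fin n) : Fin n :=
  if c = -1 then rev r else r

def dwn {n : ℕ} (r : Fin n) : Fin n := if h : r.1 + 1 < n then ⟨r.1 + 1, h⟩ else r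

def upr {n : ℕ} (r : Fin n) : Fin n := ⟨r.1 - 1, by have := r.2; omega⟩

def eD (m : ℕ) {n : ℕ} (v : V m n) : Sym2 (V m n) := s(v, (v.1, dwn v.2))
def eU (m : ℕ) {n : ℕ} (v : V m n) : Sym2 (V m n) := s(v, (v.1, upr v.2))
def eR (m : ℕ) {n : ℕ} (v : V m n) : Sym2 (V m n) := s(v, (v.1 + 1, hrow m v.1 v.2))
def eL (m : ℕ) {n : ℕ} (v : V m n) : Sym2 (V m n) :=
  s(v, (v.1 - 1, hrow m (v.1 - 1) v.2))

lemma one_ne (hm : 4 ≤ m) : (1 : ZMod (m - 1)) ≠ 0 := by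
  haveI : Fact (1 < m - 1) := ⟨by omega⟩
  exact one_ne_zero

lemma two_ne (hm : 4 ≤ m) : (2 : ZMod (m - 1)) ≠ 0 := by
  haveI : NeZero (m - 1) := ⟨by omega⟩
  intro h
  have h2 : ((2 : ℕ) : ZMod (m - 1)) = 0 := by push_cast; exact h
  rw [ZMod.natCast_eq_zero_iff] at h2
  have := Nat.le_of_dvd (by norm_num) h2
  omega

lemma m2_cast (hm : 4 ≤ m) : ((m - 2 : ℕ) : ZMod (m - 1)) = -1 := by
  have h : m - 2 + 1 = m - 1 := by omega
  have : ((m - 2 : ℕ) : ZMod (m - 1)) + 1 = ((m - 1 : ℕ) : ZMod (m - 1)) := by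
    rw [← h]; push_cast; ring
  rw [ZMod.natCast_self] at this
  linear_combination this

lemma rev_rev {n : ℕ} (r : Fin n) : rev (rev r) = r := by
  have := r.2; unfold rev; exact Fin.ext (by simp; omega)

lemma hrow_hrow (c : ZMod (m - 1)) (r : Fin n) : hrow m c (hrow m c r) = r := by
  unfold hrow; split
  · exact rev_rev r
  · rfl

lemma hrow_inj {c : ZMod (m - 1)} {r r' : Fin n} (h : hrow m c r = hrow m c r') :
    r = r' := by
  have := congrArg (hrow m c) h
  rwa [hrow_hrow, hrow_hrow] at this

lemma hrow_bdy (c : ZMod (m - 1)) (r : Fin n) :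
    ((hrow m c r).1 = 0 ∨ (hrow m c r).1 = n - 1) ↔ (r.1 = 0 ∨ r.1 = n - 1) := by
  have := r.2; unfold hrow; split
  · simp only [rev]; omega
  · rfl


lemma rel_iff (hm : 4 ≤ m) {v w : V m n} :
    gmlRel m n v w ↔
      (v.1 = w.1 ∧ v.2.1 + 1 = w.2.1) ∨ (w.1 = v.1 + 1 ∧ w.2 = hrow m v.1 v.2) := by
  unfold gmlRel
  rw [m2_cast hm]
  constructor
  · rintro (h | ⟨h1, h2, h3⟩ | ⟨h1, h2, h3⟩)
    · exact Or.inl h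
    · exact Or.inr ⟨h2, by rw [hrow, if_neg h1, h3]⟩
    · refine Or.inr ⟨by rw [h2, h1]; ring, ?_⟩
      rw [hrow, if_pos h1]
      have := v.2.2; have := w.2.2
      exact Fin.ext (by simp [rev]; omega)
  · rintro (h | ⟨h1, h2⟩)
    · exact Or.inl h
    · by_cases hc : v.1 = -1
      · refine Or.inr (Or.inr ⟨hc, by rw [h1, hc]; ring, ?_⟩)
        rw [hrow, if_pos hc] at h2
        have := v.2.2; have := w.2.2
        rw [h2]; simp [rev]; omega
      · exact Or.inr (Or.inl ⟨hc, h1, by rw [hrow, if_neg hc] at h2; exact h2.symm⟩)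

lemma adj_iff (hm : 4 ≤ m) {v w : V m n} :
    (GML m n).Adj v w ↔
      (w.1 = v.1 ∧ (w.2.1 = v.2.1 + 1 ∨ v.2.1 = w.2.1 + 1)) ∨
      (w.1 = v.1 + 1 ∧ w.2 = hrow m v.1 v.2) ∨
      (v.1 = w.1 + 1 ∧ v.2 = hrow m w.1 w.2) := by
  show (SimpleGraph.fromRel _).Adj v w ↔ _
  rw [SimpleGraph.fromRel_adj, rel_iff hm, rel_iff hm]
  constructor
  · rintro ⟨hne, (⟨h1, h2⟩ | ⟨h1, h2⟩) | (⟨h1, h2⟩ | ⟨h1, h2⟩)⟩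
    · exact Or.inl ⟨h1.symm, Or.inl h2.symm⟩
    · exact Or.inr (Or.inl ⟨h1, h2⟩)
    · exact Or.inl ⟨h1, Or.inr h2.symm⟩
    · exact Or.inr (Or.inr ⟨h1, h2⟩)
  · rintro (⟨h1, h2 | h2⟩ | ⟨h1, h2⟩ | ⟨h1, h2⟩)
    · exact ⟨fun he => by rw [he] at h2; omega, Or.inl (Or.inl ⟨h1.symm, h2.symm⟩)⟩
    · exact ⟨fun he => by rw [he] at h2; omega, Or.inr (Or.inl ⟨h1, h2.symm⟩)⟩
    · refine ⟨fun he => ?_, Or.inl (Or.inr ⟨h1, h2⟩)⟩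
      rw [he] at h1
      exact one_ne hm (by linear_combination -h1)
    · refine ⟨fun he => ?_, Or.inr (Or.inr ⟨h1, h2⟩)⟩
      rw [he] at h1
      exact one_ne hm (by linear_combination -h1)


lemma dwn_val {r : Fin n} (h : r.1 ≠ n - 1) : (dwn r).1 = r.1 + 1 := by
  have := r.2; rw [dwn, dif_pos (by omega)]

lemma adj_eD (hm : 4 ≤ m) {v : V m n} (h : v.2.1 ≠ n - 1) :
    (GML m n).Adj v (v.1, dwn v.2) := by
  rw [adj_iff hm]
  exact Or.inl ⟨rfl, Or.inl (dwn_val h)⟩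

lemma adj_eU (hm : 4 ≤ m) {v : V m n} (h : v.2.1 ≠ 0) :
    (GML m n).Adj v (v.1, upr v.2) := by
  rw [adj_iff hm]
  refine Or.inl ⟨rfl, Or.inr ?_⟩
  show v.2.1 = v.2.1 - 1 + 1
  omega

lemma adj_eR (hm : 4 ≤ m) (v : V m n) :
    (GML m n).Adj v (v.1 + 1, hrow m v.1 v.2) := by
  rw [adj_iff hm]
  exact Or.inr (Or.inl ⟨rfl, rfl⟩)

lemma adj_eL (hm : 4 ≤ m) (v : V m n) :
    (GML m n).Adj v (v.1 - 1, hrow m (v.1 - 1) v.2) := by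
  rw [adj_iff hm]
  exact Or.inr (Or.inr ⟨by ring, (hrow_hrow _ _).symm⟩)

lemma eD_mem (hm : 4 ≤ m) {v : V m n} (h : v.2.1 ≠ n - 1) :
    eD m v ∈ (GML m n).edgeSet := (GML m n).mem_edgeSet.mpr (adj_eD hm h)

lemma eU_mem (hm : 4 ≤ m) {v : V m n} (h : v.2.1 ≠ 0) :
    eU m v ∈ (GML m n).edgeSet := (GML m n).mem_edgeSet.mpr (adj_eU hm h)

lemma eR_mem (hm : 4 ≤ m) (v : V m n) :
    eR m v ∈ (GML m n).edgeSet := (GML m n).mem_edgeSet.mpr (adj_eR hm v)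

lemma eL_mem (hm : 4 ≤ m) (v : V m n) :
    eL m v ∈ (GML m n).edgeSet := (GML m n).mem_edgeSet.mpr (adj_eL hm v)

/-- `eL v` is the right-edge of the left neighbour. -/
lemma eL_eq_eR (v : V m n) :
    eL m v = eR m (v.1 - 1, hrow m (v.1 - 1) v.2) := by
  rw [eL, eR, Sym2.eq_swap]
  exact Sym2.congr_right.mpr (Prod.ext (by ring) (hrow_hrow _ _).symm)

/-- `eU v` is the down-edge of the vertex above (for `v.2 ≠ 0`). -/
lemma eU_eq_eD {v : V m n} (h : v.2.1 ≠ 0) :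
    eU m v = eD m (v.1, upr v.2) := by
  have h2 := v.2.2
  have hd : dwn (upr v.2) = v.2 := by
    rw [dwn, dif_pos (show (upr v.2).1 + 1 < n by simp [upr]; omega)]
    exact Fin.ext (by simp [upr]; omega)
  rw [eU, eD, Sym2.eq_swap]
  exact Sym2.congr_right.mpr (Prod.ext rfl hd.symm)


lemma eD_inj {v w : V m n} (hv : v.2.1 ≠ n - 1) (hw : w.2.1 ≠ n - 1)
    (h : eD m v = eD m w) : v = w := by
  rw [eD, eD, Sym2.eq_iff] at h
  rcases h with ⟨h1, _⟩ | ⟨h1, h2⟩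
  · exact h1
  · exfalso
    have a1 : v.2.1 = (dwn w.2).1 := congrArg (fun p => p.2.1) h1
    have a2 : (dwn v.2).1 = w.2.1 := congrArg (fun p => p.2.1) h2
    rw [dwn_val hw] at a1
    rw [dwn_val hv] at a2
    omega

lemma eR_inj (hm : 4 ≤ m) {v w : V m n} (h : eR m v = eR m w) : v = w := by
  rw [eR, eR, Sym2.eq_iff] at h
  rcases h with ⟨h1, _⟩ | ⟨h1, h2⟩
  · exact h1
  · exfalso
    rw [Prod.mk.injEq] at h1 h2
    exact two_ne hm (by linear_combination h2.1 - h1.1)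

lemma eD_ne_eR (hm : 4 ≤ m) {v w : V m n} (hv : v.2.1 ≠ n - 1) :
    eD m v ≠ eR m w := by
  intro h
  rw [eD, eR, Sym2.eq_iff] at h
  rcases h with ⟨h1, h2⟩ | ⟨h1, h2⟩
  · rw [Prod.mk.injEq] at h2
    have c1 : v.1 = w.1 := by rw [h1]
    exact one_ne hm (by linear_combination c1 - h2.1)
  · rw [Prod.mk.injEq] at h1 h2
    exact one_ne hm (by linear_combination h2.1 - h1.1)

lemma eL_inj (hm : 4 ≤ m) {v w : V m n} (h : eL m v = eL m w) : v = w := by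
  rw [eL_eq_eR, eL_eq_eR] at h
  have h2 := eR_inj hm h
  rw [Prod.mk.injEq] at h2
  have hc : v.1 = w.1 := by linear_combination h2.1
  have r1 := h2.2
  rw [← hc] at r1
  exact Prod.ext hc (hrow_inj r1)

lemma ndeg_eq (hm : 4 ≤ m) (hn : 4 ≤ n) (v : V m n) :
    ndeg (GML m n) v = if v.2.1 = 0 ∨ v.2.1 = n - 1 then 3 else 4 := by
  haveI : NeZero (m - 1) := ⟨by omega⟩
  obtain ⟨c, r⟩ := v
  have hr := r.2
  have hcl : (c : ZMod (m - 1)) ≠ c - 1 := fun h => one_ne hm (by linear_combination h)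
  have hcr : (c : ZMod (m - 1)) ≠ c + 1 := fun h => one_ne hm (by linear_combination -h)
  have hlr : (c - 1 : ZMod (m - 1)) ≠ c + 1 := fun h => two_ne hm (by linear_combination -h)
  have fwd : ∀ w : V m n, (GML m n).Adj (c, r) w →
      w = (c, dwn r) ∧ r.1 ≠ n - 1 ∨ w = (c, upr r) ∧ r.1 ≠ 0 ∨
      w = (c + 1, hrow m c r) ∨ w = (c - 1, hrow m (c - 1) r) := by
    intro w hw
    rcases (adj_iff hm).mp hw with ⟨h1, h2 | h2⟩ | ⟨h1, h2⟩ | ⟨h1, h2⟩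
    · have h2' : w.2.1 = r.1 + 1 := h2
      have hw2 := w.2.2
      refine Or.inl ⟨Prod.ext h1 (Fin.ext ?_), by omega⟩
      rw [dwn_val (by omega : r.1 ≠ n - 1)]
      omega
    · have h2' : r.1 = w.2.1 + 1 := h2
      refine Or.inr (Or.inl ⟨Prod.ext h1 (Fin.ext ?_), by omega⟩)
      show w.2.1 = (upr r).1
      simp only [upr]
      omega
    · exact Or.inr (Or.inr (Or.inl (Prod.ext h1 h2)))
    · have h1' : c = w.1 + 1 := h1
      have h2' : r = hrow m w.1 w.2 := h2
      have hw2 : w.2 = hrow m w.1 r := by rw [h2', hrow_hrow]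
      have hw1 : w.1 = c - 1 := by linear_combination -h1'
      refine Or.inr (Or.inr (Or.inr (Prod.ext hw1 ?_)))
      rw [hw2, hw1]
  by_cases h0 : r.1 = 0
  · have hN : (GML m n).neighborSet (c, r) =
        {(c, dwn r), (c - 1, hrow m (c - 1) r), (c + 1, hrow m c r)} := by
      ext w
      simp only [SimpleGraph.mem_neighborSet, Set.mem_insert_iff, Set.mem_singleton_iff]
      constructor
      · intro hw
        rcases fwd w hw with ⟨rfl, _⟩ | ⟨rfl, hne⟩ | rfl | rfl
        · exact Or.inl rfl
        · omega
        · exact Or.inr (Or.inr rfl)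
        · exact Or.inr (Or.inl rfl)
      · rintro (rfl | rfl | rfl)
        · exact adj_eD hm (show r.1 ≠ n - 1 by omega)
        · exact adj_eL hm (c, r)
        · exact adj_eR hm (c, r)
    rw [ndeg, hN, if_pos (Or.inl h0)]
    rw [Set.ncard_insert_of_notMem (by
      simp only [Set.mem_insert_iff, Set.mem_singleton_iff]
      push_neg
      exact ⟨fun h => hcl (by rw [Prod.mk.injEq] at h; exact h.1), fun h => hcr (by rw [Prod.mk.injEq] at h; exact h.1)⟩)]
    rw [Set.ncard_pair (fun h => hlr (by rw [Prod.mk.injEq] at h; exact h.1))]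
  · by_cases h1 : r.1 = n - 1
    · have hN : (GML m n).neighborSet (c, r) =
          {(c, upr r), (c - 1, hrow m (c - 1) r), (c + 1, hrow m c r)} := by
        ext w
        simp only [SimpleGraph.mem_neighborSet, Set.mem_insert_iff, Set.mem_singleton_iff]
        constructor
        · intro hw
          rcases fwd w hw with ⟨rfl, hne⟩ | ⟨rfl, _⟩ | rfl | rfl
          · omega
          · exact Or.inl rfl
          · exact Or.inr (Or.inr rfl)
          · exact Or.inr (Or.inl rfl)
        · rintro (rfl | rfl | rfl)
          · exact adj_eU hm (show r.1 ≠ 0 by omega)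
          · exact adj_eL hm (c, r)
          · exact adj_eR hm (c, r)
      rw [ndeg, hN, if_pos (Or.inr h1)]
      rw [Set.ncard_insert_of_notMem (by
        simp only [Set.mem_insert_iff, Set.mem_singleton_iff]
        push_neg
        exact ⟨fun h => hcl (by rw [Prod.mk.injEq] at h; exact h.1), fun h => hcr (by rw [Prod.mk.injEq] at h; exact h.1)⟩)]
      rw [Set.ncard_pair (fun h => hlr (by rw [Prod.mk.injEq] at h; exact h.1))]
    · have hN : (GML m n).neighborSet (c, r) =
          {(c, upr r), (c, dwn r), (c - 1, hrow m (c - 1) r), (c + 1, hrow m c r)} := by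
        ext w
        simp only [SimpleGraph.mem_neighborSet, Set.mem_insert_iff, Set.mem_singleton_iff]
        constructor
        · intro hw
          rcases fwd w hw with ⟨rfl, _⟩ | ⟨rfl, _⟩ | rfl | rfl
          · exact Or.inr (Or.inl rfl)
          · exact Or.inl rfl
          · exact Or.inr (Or.inr (Or.inr rfl))
          · exact Or.inr (Or.inr (Or.inl rfl))
        · rintro (rfl | rfl | rfl | rfl)
          · exact adj_eU hm (show r.1 ≠ 0 by omega)
          · exact adj_eD hm (show r.1 ≠ n - 1 by omega)
          · exact adj_eL hm (c, r)
          · exact adj_eR hm (c, r)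
      rw [ndeg, hN, if_neg (by push_neg; exact ⟨h0, h1⟩)]
      have hud : (c, upr r) ∉ ({(c, dwn r), (c - 1, hrow m (c - 1) r),
          (c + 1, hrow m c r)} : Set (V m n)) := by
        simp only [Set.mem_insert_iff, Set.mem_singleton_iff]
        push_neg
        refine ⟨fun h => ?_, fun h => hcl (by rw [Prod.mk.injEq] at h; exact h.1), fun h => hcr (by rw [Prod.mk.injEq] at h; exact h.1)⟩
        rw [Prod.mk.injEq] at h
        have h5 := congrArg Fin.val h.2
        rw [dwn_val h1] at h5
        simp only [upr] at h5
        omega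
      rw [Set.ncard_insert_of_notMem hud]
      rw [Set.ncard_insert_of_notMem (by
        simp only [Set.mem_insert_iff, Set.mem_singleton_iff]
        push_neg
        exact ⟨fun h => hcl (by rw [Prod.mk.injEq] at h; exact h.1), fun h => hcr (by rw [Prod.mk.injEq] at h; exact h.1)⟩)]
      rw [Set.ncard_pair (fun h => hlr (by rw [Prod.mk.injEq] at h; exact h.1))]


lemma ndeg_line {W : Type*} [Finite W] {G : SimpleGraph W} {u v : W} (h : G.Adj u v) :
    ndeg G.lineGraph ⟨s(u, v), G.mem_edgeSet.mpr h⟩ = ndeg G u + ndeg G v - 2 := by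
  classical
  set e : G.edgeSet := ⟨s(u, v), G.mem_edgeSet.mpr h⟩ with he
  have huv : u ≠ v := G.ne_of_adj h
  have key : Subtype.val '' (G.lineGraph.neighborSet e) =
      (fun w => s(u, w)) '' (G.neighborSet u \ {v}) ∪
      (fun w => s(v, w)) '' (G.neighborSet v \ {u}) := by
    ext f
    simp only [Set.mem_image, Set.mem_union, SimpleGraph.mem_neighborSet,
      Set.mem_diff, Set.mem_singleton_iff]
    constructor
    · rintro ⟨⟨f', hf'⟩, hadj, rfl⟩
      obtain ⟨hne, x, hx1, hx2⟩ := SimpleGraph.lineGraph_adj_iff_exists.mp hadj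
      obtain ⟨w, rfl⟩ := Sym2.mem_iff_exists.mp hx2
      have hG : G.Adj x w := G.mem_edgeSet.mp hf'
      have hwx : w ≠ x := fun hh => G.loopless.irrefl x (by rwa [hh] at hG)
      rcases Sym2.mem_iff.mp hx1 with rfl | rfl
      · exact Or.inl ⟨w, ⟨hG, fun hh => hne (Subtype.ext
          (show s(x, v) = s(x, w) from by rw [hh]))⟩, rfl⟩
      · exact Or.inr ⟨w, ⟨hG, fun hh => hne (Subtype.ext
          (show s(u, x) = s(x, w) from by rw [hh, Sym2.eq_swap]))⟩, rfl⟩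
    · rintro (⟨w, ⟨hw, hwv⟩, rfl⟩ | ⟨w, ⟨hw, hwu⟩, rfl⟩)
      · refine ⟨⟨s(u, w), G.mem_edgeSet.mpr hw⟩, ?_, rfl⟩
        refine SimpleGraph.lineGraph_adj_iff_exists.mpr ⟨fun hh => ?_, u,
          Sym2.mem_mk_left u v, Sym2.mem_mk_left u w⟩
        have : s(u, v) = s(u, w) := congrArg Subtype.val hh
        exact hwv (Sym2.congr_right.mp this).symm
      · refine ⟨⟨s(v, w), G.mem_edgeSet.mpr hw⟩, ?_, rfl⟩
        refine SimpleGraph.lineGraph_adj_iff_exists.mpr ⟨fun hh => ?_, v,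
          Sym2.mem_mk_right u v, Sym2.mem_mk_left v w⟩
        have : s(u, v) = s(v, w) := congrArg Subtype.val hh
        rw [Sym2.eq_swap] at this
        exact hwu (Sym2.congr_right.mp this).symm
  have hdisj : Disjoint ((fun w => s(u, w)) '' (G.neighborSet u \ {v}))
      ((fun w => s(v, w)) '' (G.neighborSet v \ {u})) := by
    rw [Set.disjoint_left]
    rintro f ⟨w1, ⟨_, hw1⟩, rfl⟩ ⟨w2, ⟨_, hw2⟩, heq⟩
    rcases Sym2.eq_iff.mp heq with ⟨h1, _⟩ | ⟨h1, h2⟩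
    · exact huv h1.symm
    · exact hw1 (Set.mem_singleton_iff.mpr h1.symm)
  have hinj1 : Function.Injective (fun w => s(u, w)) :=
    fun a b hab => Sym2.congr_right.mp hab
  have hinj2 : Function.Injective (fun w => s(v, w)) :=
    fun a b hab => Sym2.congr_right.mp hab
  have hcalc : ndeg G.lineGraph e = (Subtype.val '' (G.lineGraph.neighborSet e)).ncard :=
    (Set.ncard_image_of_injective _ Subtype.val_injective).symm
  rw [hcalc, key, Set.ncard_union_eq hdisj ((Set.toFinite _).image _) ((Set.toFinite _).image _),
    Set.ncard_image_of_injective _ hinj1, Set.ncard_image_of_injective _ hinj2,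
    Set.ncard_diff_singleton_of_mem (by exact h),
    Set.ncard_diff_singleton_of_mem (by exact h.symm)]
  have hu1 : 0 < (G.neighborSet u).ncard :=
    (Set.ncard_pos (Set.toFinite _)).mpr ⟨v, h⟩
  have hv1 : 0 < (G.neighborSet v).ncard :=
    (Set.ncard_pos (Set.toFinite _)).mpr ⟨u, h.symm⟩
  show (G.neighborSet u).ncard - 1 + ((G.neighborSet v).ncard - 1) = _
  rw [ndeg, ndeg]
  omega


noncomputable def Dg (m n : ℕ) : Sym2 (V m n) → ℕ :=
  Sym2.lift ⟨fun u v => ndeg (GML m n) u + ndeg (GML m n) v - 2,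
    fun u v => by dsimp only; rw [Nat.add_comm]⟩

noncomputable def F (m n : ℕ) : Sym2 (Sym2 (V m n)) → MvPolynomial (Fin 2) ℤ :=
  Sym2.lift ⟨fun a b =>
    (X 0 : MvPolynomial (Fin 2) ℤ) ^ (min (Dg m n a) (Dg m n b)) *
      (X 1 : MvPolynomial (Fin 2) ℤ) ^ (max (Dg m n a) (Dg m n b)),
    fun a b => by dsimp only; rw [min_comm, max_comm]⟩

lemma Dg_spec (hm : 4 ≤ m) (e : (GML m n).edgeSet) :
    ndeg (GML m n).lineGraph e = Dg m n e.1 := by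
  haveI : NeZero (m - 1) := ⟨by omega⟩
  obtain ⟨e, he⟩ := e
  induction e using Sym2.ind with
  | _ u v =>
    have h : (GML m n).Adj u v := (GML m n).mem_edgeSet.mp he
    have h2 := ndeg_line (W := V m n) h
    rw [Dg, Sym2.lift_mk]
    exact h2

lemma D_eR (hm : 4 ≤ m) (hn : 4 ≤ n) (v : V m n) :
    Dg m n (eR m v) = if v.2.1 = 0 ∨ v.2.1 = n - 1 then 4 else 6 := by
  rw [eR, Dg, Sym2.lift_mk]
  dsimp only
  rw [ndeg_eq hm hn, ndeg_eq hm hn]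
  dsimp only
  have hb := hrow_bdy (m := m) v.1 v.2
  have hr := v.2.2
  split_ifs <;> (try omega) <;> (simp only [false_or, not_or] at *; omega)

lemma D_eL (hm : 4 ≤ m) (hn : 4 ≤ n) (v : V m n) :
    Dg m n (eL m v) = if v.2.1 = 0 ∨ v.2.1 = n - 1 then 4 else 6 := by
  rw [eL, Dg, Sym2.lift_mk]
  dsimp only
  rw [ndeg_eq hm hn, ndeg_eq hm hn]
  dsimp only
  have hb := hrow_bdy (m := m) (v.1 - 1) v.2
  have hr := v.2.2
  split_ifs <;> (try omega) <;> (simp only [false_or, not_or] at *; omega)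

lemma D_eD (hm : 4 ≤ m) (hn : 4 ≤ n) {v : V m n} (h : v.2.1 ≠ n - 1) :
    Dg m n (eD m v) = if v.2.1 = 0 ∨ v.2.1 = n - 2 then 5 else 6 := by
  rw [eD, Dg, Sym2.lift_mk]
  dsimp only
  rw [ndeg_eq hm hn, ndeg_eq hm hn]
  dsimp only
  rw [dwn_val h]
  have hr := v.2.2
  split_ifs <;> (try omega) <;> (simp only [false_or, not_or] at *; omega)

lemma D_eU (hm : 4 ≤ m) (hn : 4 ≤ n) {v : V m n} (h : v.2.1 ≠ 0) :
    Dg m n (eU m v) = if v.2.1 = 1 ∨ v.2.1 = n - 1 then 5 else 6 := by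
  rw [eU, Dg, Sym2.lift_mk]
  dsimp only
  rw [ndeg_eq hm hn, ndeg_eq hm hn]
  dsimp only
  have hu : (upr v.2).1 = v.2.1 - 1 := rfl
  rw [hu]
  have hr := v.2.2
  split_ifs <;> (try omega) <;> (simp only [false_or, not_or] at *; omega)

lemma MPoly_eq (hm : 4 ≤ m) :
    MPoly (GML m n).lineGraph =
      ∑ᶠ y ∈ Sym2.map Subtype.val '' (GML m n).lineGraph.edgeSet, F m n y := by
  conv_rhs => rw [finsum_mem_image ((Sym2.map.injective Subtype.val_injective).injOn)]
  unfold MPoly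
  apply finsum_mem_congr rfl
  intro e _
  induction e using Sym2.ind with
  | _ a b =>
    rw [Sym2.map_pair_eq, Sym2.lift_mk, F, Sym2.lift_mk]
    dsimp only
    rw [← Dg_spec hm a, ← Dg_spec hm b]


def g1 (m : ℕ) {n : ℕ} (v : V m n) : Sym2 (Sym2 (V m n)) := s(eL m v, eR m v)
def g2 (m : ℕ) {n : ℕ} (v : V m n) : Sym2 (Sym2 (V m n)) := s(eL m v, eD m v)
def g3 (m : ℕ) {n : ℕ} (v : V m n) : Sym2 (Sym2 (V m n)) := s(eR m v, eD m v)
def g4 (m : ℕ) {n : ℕ} (v : V m n) : Sym2 (Sym2 (V m n)) := s(eL m v, eU m v)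
def g5 (m : ℕ) {n : ℕ} (v : V m n) : Sym2 (Sym2 (V m n)) := s(eR m v, eU m v)
def g6 (m : ℕ) {n : ℕ} (v : V m n) : Sym2 (Sym2 (V m n)) := s(eU m v, eD m v)

def T1 (m n : ℕ) : Set (V m n) := Set.univ
def T2 (m n : ℕ) : Set (V m n) := {v | v.2.1 ≠ n - 1}
def T4 (m n : ℕ) : Set (V m n) := {v | v.2.1 ≠ 0}
def T6 (m n : ℕ) : Set (V m n) := {v | v.2.1 ≠ 0 ∧ v.2.1 ≠ n - 1}

lemma upr_ne (hn : 4 ≤ n) {v : V m n} : (upr v.2).1 ≠ n - 1 := by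
  have := v.2.2
  show v.2.1 - 1 ≠ n - 1
  omega

lemma eU_ne_eR (hm : 4 ≤ m) (hn : 4 ≤ n) {v w : V m n} (hv : v.2.1 ≠ 0) :
    eU m v ≠ eR m w := by
  rw [eU_eq_eD hv]
  exact eD_ne_eR hm (upr_ne hn)

lemma eD_ne_eL (hm : 4 ≤ m) {v w : V m n} (hv : v.2.1 ≠ n - 1) : eD m v ≠ eL m w := by
  rw [eL_eq_eR]
  exact eD_ne_eR hm hv

lemma eU_ne_eL (hm : 4 ≤ m) (hn : 4 ≤ n) {v w : V m n} (hv : v.2.1 ≠ 0) :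
    eU m v ≠ eL m w := by
  rw [eL_eq_eR]
  exact eU_ne_eR hm hn hv

lemma eU_inj (hn : 4 ≤ n) {v w : V m n} (hv : v.2.1 ≠ 0) (hw : w.2.1 ≠ 0)
    (h : eU m v = eU m w) : v = w := by
  rw [eU_eq_eD hv, eU_eq_eD hw] at h
  have h2 := eD_inj (upr_ne hn (v := v)) (upr_ne hn (v := w)) h
  rw [Prod.mk.injEq] at h2
  have h3 : v.2.1 - 1 = w.2.1 - 1 := congrArg Fin.val h2.2
  have := v.2.2; have := w.2.2
  exact Prod.ext h2.1 (Fin.ext (by omega))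

lemma eU_ne_eD (hn : 4 ≤ n) {v w : V m n} (hv : v.2.1 ≠ 0) (hw : w.2.1 ≠ n - 1) :
    eU m v = eD m w → w = (v.1, upr v.2) := by
  intro h
  rw [eU_eq_eD hv] at h
  exact eD_inj hw (upr_ne hn (v := v)) h.symm

lemma eL_ne_eR_self (hm : 4 ≤ m) (v : V m n) : eL m v ≠ eR m v := by
  rw [eL_eq_eR]
  intro h
  have h2 := eR_inj hm h
  have c := congrArg Prod.fst h2
  dsimp only at c
  exact one_ne hm (by linear_combination -c)

lemma mem_S_iff (y : Sym2 (Sym2 (V m n))) :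
    y ∈ Sym2.map Subtype.val '' (GML m n).lineGraph.edgeSet ↔
      ∃ a b, a ∈ (GML m n).edgeSet ∧ b ∈ (GML m n).edgeSet ∧ a ≠ b ∧
        (∃ x, x ∈ a ∧ x ∈ b) ∧ y = s(a, b) := by
  constructor
  · rintro ⟨e, he, rfl⟩
    induction e using Sym2.ind with
    | _ a b =>
      rw [SimpleGraph.mem_edgeSet] at he
      obtain ⟨hne, x, hx1, hx2⟩ := SimpleGraph.lineGraph_adj_iff_exists.mp he
      exact ⟨a.1, b.1, a.2, b.2, fun hh => hne (Subtype.ext hh), ⟨x, hx1, hx2⟩,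
        (Sym2.map_pair_eq _ _ _).symm⟩
  · rintro ⟨a, b, ha, hb, hab, ⟨x, hx1, hx2⟩, rfl⟩
    refine ⟨s(⟨a, ha⟩, ⟨b, hb⟩), ?_, Sym2.map_pair_eq _ _ _⟩
    rw [SimpleGraph.mem_edgeSet]
    exact SimpleGraph.lineGraph_adj_iff_exists.mpr
      ⟨fun hh => hab (congrArg Subtype.val hh), x, hx1, hx2⟩

lemma edge_cases (hm : 4 ≤ m) {a : Sym2 (V m n)} {x : V m n}
    (ha : a ∈ (GML m n).edgeSet) (hx : x ∈ a) :
    (a = eD m x ∧ x.2.1 ≠ n - 1) ∨ (a = eU m x ∧ x.2.1 ≠ 0) ∨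
      a = eR m x ∨ a = eL m x := by
  obtain ⟨w, rfl⟩ := Sym2.mem_iff_exists.mp hx
  have hadj : (GML m n).Adj x w := (GML m n).mem_edgeSet.mp ha
  have hw2 := w.2.2
  have hx2 := x.2.2
  rcases (adj_iff hm).mp hadj with ⟨h1, h2 | h2⟩ | ⟨h1, h2⟩ | ⟨h1, h2⟩
  · refine Or.inl ⟨?_, by omega⟩
    rw [eD]
    exact Sym2.congr_right.mpr
      (Prod.ext h1 (Fin.ext (by rw [dwn_val (show x.2.1 ≠ n - 1 by omega)]; omega)))
  · refine Or.inr (Or.inl ⟨?_, by omega⟩)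
    rw [eU]
    exact Sym2.congr_right.mpr
      (Prod.ext h1 (Fin.ext (show w.2.1 = (upr x.2).1 by simp only [upr]; omega)))
  · exact Or.inr (Or.inr (Or.inl (by rw [eR]; exact Sym2.congr_right.mpr (Prod.ext h1 h2))))
  · refine Or.inr (Or.inr (Or.inr ?_))
    have hw1 : w.1 = x.1 - 1 := by linear_combination -h1
    rw [eL]
    refine Sym2.congr_right.mpr (Prod.ext hw1 ?_)
    show w.2 = hrow m (x.1 - 1) x.2
    rw [← hw1, h2, hrow_hrow]

lemma S_eq (hm : 4 ≤ m) (hn : 4 ≤ n) :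
    Sym2.map Subtype.val '' (GML m n).lineGraph.edgeSet =
      g1 m '' T1 m n ∪ (g2 m '' T2 m n ∪ (g3 m '' T2 m n ∪
        (g4 m '' T4 m n ∪ (g5 m '' T4 m n ∪ g6 m '' T6 m n)))) := by
  ext y
  rw [mem_S_iff]
  constructor
  · rintro ⟨a, b, ha, hb, hab, ⟨x, hxa, hxb⟩, rfl⟩
    rcases edge_cases hm ha hxa with ⟨rfl, hc1⟩ | ⟨rfl, hc1⟩ | rfl | rfl <;>
      rcases edge_cases hm hb hxb with ⟨rfl, hc2⟩ | ⟨rfl, hc2⟩ | rfl | rfl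
    · exact absurd rfl hab
    · exact Or.inr (Or.inr (Or.inr (Or.inr (Or.inr ⟨x, ⟨hc2, hc1⟩, Sym2.eq_swap⟩))))
    · exact Or.inr (Or.inr (Or.inl ⟨x, hc1, Sym2.eq_swap⟩))
    · exact Or.inr (Or.inl ⟨x, hc1, Sym2.eq_swap⟩)
    · exact Or.inr (Or.inr (Or.inr (Or.inr (Or.inr ⟨x, ⟨hc1, hc2⟩, rfl⟩))))
    · exact absurd rfl hab
    · exact Or.inr (Or.inr (Or.inr (Or.inr (Or.inl ⟨x, hc1, Sym2.eq_swap⟩))))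
    · exact Or.inr (Or.inr (Or.inr (Or.inl ⟨x, hc1, Sym2.eq_swap⟩)))
    · exact Or.inr (Or.inr (Or.inl ⟨x, hc2, rfl⟩))
    · exact Or.inr (Or.inr (Or.inr (Or.inr (Or.inl ⟨x, hc2, rfl⟩))))
    · exact absurd rfl hab
    · exact Or.inl ⟨x, trivial, Sym2.eq_swap⟩
    · exact Or.inr (Or.inl ⟨x, hc2, rfl⟩)
    · exact Or.inr (Or.inr (Or.inr (Or.inl ⟨x, hc2, rfl⟩)))
    · exact Or.inl ⟨x, trivial, rfl⟩
    · exact absurd rfl hab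
  · have hxL : ∀ v : V m n, v ∈ eL m v := fun v => Sym2.mem_mk_left _ _
    have hxR : ∀ v : V m n, v ∈ eR m v := fun v => Sym2.mem_mk_left _ _
    have hxD : ∀ v : V m n, v ∈ eD m v := fun v => Sym2.mem_mk_left _ _
    have hxU : ∀ v : V m n, v ∈ eU m v := fun v => Sym2.mem_mk_left _ _
    rintro (⟨v, _, rfl⟩ | ⟨v, hv, rfl⟩ | ⟨v, hv, rfl⟩ | ⟨v, hv, rfl⟩ | ⟨v, hv, rfl⟩ |
      ⟨v, hv, rfl⟩)
    · exact ⟨eL m v, eR m v, eL_mem hm v, eR_mem hm v, eL_ne_eR_self hm v,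
        ⟨v, hxL v, hxR v⟩, rfl⟩
    · exact ⟨eL m v, eD m v, eL_mem hm v, eD_mem hm hv,
        fun h => eD_ne_eL hm hv h.symm, ⟨v, hxL v, hxD v⟩, rfl⟩
    · exact ⟨eR m v, eD m v, eR_mem hm v, eD_mem hm hv,
        fun h => eD_ne_eR hm hv h.symm, ⟨v, hxR v, hxD v⟩, rfl⟩
    · exact ⟨eL m v, eU m v, eL_mem hm v, eU_mem hm hv,
        fun h => eU_ne_eL hm hn hv h.symm, ⟨v, hxL v, hxU v⟩, rfl⟩
    · exact ⟨eR m v, eU m v, eR_mem hm v, eU_mem hm hv,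
        fun h => eU_ne_eR hm hn hv h.symm, ⟨v, hxR v, hxU v⟩, rfl⟩
    · refine ⟨eU m v, eD m v, eU_mem hm hv.1, eD_mem hm hv.2, fun h => ?_,
        ⟨v, hxU v, hxD v⟩, rfl⟩
      have h2 := eU_ne_eD hn hv.1 hv.2 h
      have h3 : v.2.1 = v.2.1 - 1 := congrArg (fun p => p.2.1) h2
      have h4 : v.2.1 ≠ 0 := hv.1
      omega


lemma disjHelp {α β : Type*} {f g : β → α} {s t : Set β}
    (h : ∀ v ∈ s, ∀ w ∈ t, f v ≠ g w) : Disjoint (f '' s) (g '' t) := by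
  rw [Set.disjoint_left]
  rintro x ⟨v, hv, rfl⟩ ⟨w, hw, hgw⟩
  exact h v hv w hw hgw.symm

lemma d12 (hm : 4 ≤ m) : Disjoint (g1 m '' T1 m n) (g2 m '' T2 m n) := by
  refine disjHelp ?_
  rintro v - w hw h
  rw [g1, g2] at h
  rcases Sym2.eq_iff.mp h with ⟨h1, h2⟩ | ⟨h1, h2⟩
  · exact eD_ne_eR hm hw h2.symm
  · exact eD_ne_eL hm hw h1.symm

lemma d13 (hm : 4 ≤ m) : Disjoint (g1 m '' T1 m n) (g3 m '' T2 m n) := by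
  refine disjHelp ?_
  rintro v - w hw h
  rw [g1, g3] at h
  rcases Sym2.eq_iff.mp h with ⟨h1, h2⟩ | ⟨h1, h2⟩
  · exact eD_ne_eR hm hw h2.symm
  · exact eD_ne_eL hm hw h1.symm

lemma d14 (hm : 4 ≤ m) (hn : 4 ≤ n) : Disjoint (g1 m '' T1 m n) (g4 m '' T4 m n) := by
  refine disjHelp ?_
  rintro v - w hw h
  rw [g1, g4] at h
  rcases Sym2.eq_iff.mp h with ⟨h1, h2⟩ | ⟨h1, h2⟩
  · exact eU_ne_eR hm hn hw h2.symm
  · exact eU_ne_eL hm hn hw h1.symm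

lemma d15 (hm : 4 ≤ m) (hn : 4 ≤ n) : Disjoint (g1 m '' T1 m n) (g5 m '' T4 m n) := by
  refine disjHelp ?_
  rintro v - w hw h
  rw [g1, g5] at h
  rcases Sym2.eq_iff.mp h with ⟨h1, h2⟩ | ⟨h1, h2⟩
  · exact eU_ne_eR hm hn hw h2.symm
  · exact eU_ne_eL hm hn hw h1.symm

lemma d16 (hm : 4 ≤ m) (hn : 4 ≤ n) : Disjoint (g1 m '' T1 m n) (g6 m '' T6 m n) := by
  refine disjHelp ?_
  rintro v - w hw h
  rw [g1, g6] at h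
  rcases Sym2.eq_iff.mp h with ⟨h1, h2⟩ | ⟨h1, h2⟩
  · exact eU_ne_eL hm hn hw.1 h1.symm
  · exact eD_ne_eL hm hw.2 h1.symm

lemma d23 (hm : 4 ≤ m) : Disjoint (g2 m '' T2 m n) (g3 m '' T2 m n) := by
  refine disjHelp ?_
  rintro v hv w hw h
  rw [g2, g3] at h
  rcases Sym2.eq_iff.mp h with ⟨h1, h2⟩ | ⟨h1, h2⟩
  · have e := eD_inj hv hw h2
    rw [← e] at h1
    exact eL_ne_eR_self hm v h1
  · exact eD_ne_eL hm hw h1.symm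

lemma d24 (hm : 4 ≤ m) (hn : 4 ≤ n) : Disjoint (g2 m '' T2 m n) (g4 m '' T4 m n) := by
  refine disjHelp ?_
  rintro v hv w hw h
  rw [g2, g4] at h
  rcases Sym2.eq_iff.mp h with ⟨h1, h2⟩ | ⟨h1, h2⟩
  · have e := eU_ne_eD hn hw hv h2.symm
    have e2 := eL_inj hm h1
    have r1 : v.2.1 = w.2.1 - 1 := congrArg (fun p => p.2.1) e
    have r2 : v.2.1 = w.2.1 := congrArg (fun p => p.2.1) e2
    have hw0 : w.2.1 ≠ 0 := hw
    omega
  · exact eU_ne_eL hm hn hw h1.symm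

lemma d25 (hm : 4 ≤ m) (hn : 4 ≤ n) : Disjoint (g2 m '' T2 m n) (g5 m '' T4 m n) := by
  refine disjHelp ?_
  rintro v hv w hw h
  rw [g2, g5] at h
  rcases Sym2.eq_iff.mp h with ⟨h1, h2⟩ | ⟨h1, h2⟩
  · have e := eU_ne_eD hn hw hv h2.symm
    have c1 : v.1 = w.1 := by rw [e]
    rw [eL_eq_eR] at h1
    have e2 := eR_inj hm h1
    have c2 : v.1 - 1 = w.1 := by rw [← e2]
    exact one_ne hm (by linear_combination c1 - c2)
  · exact eU_ne_eL hm hn hw h1.symm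

lemma d26 (hm : 4 ≤ m) (hn : 4 ≤ n) : Disjoint (g2 m '' T2 m n) (g6 m '' T6 m n) := by
  refine disjHelp ?_
  rintro v hv w hw h
  rw [g2, g6] at h
  rcases Sym2.eq_iff.mp h with ⟨h1, h2⟩ | ⟨h1, h2⟩
  · exact eU_ne_eL hm hn hw.1 h1.symm
  · exact eD_ne_eL hm hw.2 h1.symm

lemma d34 (hm : 4 ≤ m) (hn : 4 ≤ n) : Disjoint (g3 m '' T2 m n) (g4 m '' T4 m n) := by
  refine disjHelp ?_
  rintro v hv w hw h
  rw [g3, g4] at h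
  rcases Sym2.eq_iff.mp h with ⟨h1, h2⟩ | ⟨h1, h2⟩
  · have e := eU_ne_eD hn hw hv h2.symm
    have c1 : v.1 = w.1 := by rw [e]
    rw [eL_eq_eR] at h1
    have e2 := eR_inj hm h1
    have c2 : v.1 = w.1 - 1 := by rw [e2]
    exact one_ne hm (by linear_combination c2 - c1)
  · exact eU_ne_eR hm hn hw h1.symm

lemma d35 (hm : 4 ≤ m) (hn : 4 ≤ n) : Disjoint (g3 m '' T2 m n) (g5 m '' T4 m n) := by
  refine disjHelp ?_
  rintro v hv w hw h
  rw [g3, g5] at h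
  rcases Sym2.eq_iff.mp h with ⟨h1, h2⟩ | ⟨h1, h2⟩
  · have e2 := eR_inj hm h1
    rw [← e2] at h2
    have hw0 : v.2.1 ≠ 0 := by
      have : w.2.1 ≠ 0 := hw
      rw [e2]; exact this
    have e := eU_ne_eD hn hw0 hv h2.symm
    have r1 : v.2.1 = v.2.1 - 1 := congrArg (fun p => p.2.1) e
    omega
  · exact eU_ne_eR hm hn hw h1.symm

lemma d36 (hm : 4 ≤ m) (hn : 4 ≤ n) : Disjoint (g3 m '' T2 m n) (g6 m '' T6 m n) := by
  refine disjHelp ?_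
  rintro v hv w hw h
  rw [g3, g6] at h
  rcases Sym2.eq_iff.mp h with ⟨h1, h2⟩ | ⟨h1, h2⟩
  · exact eU_ne_eR hm hn hw.1 h1.symm
  · exact eD_ne_eR hm hw.2 h1.symm

lemma d45 (hm : 4 ≤ m) (hn : 4 ≤ n) : Disjoint (g4 m '' T4 m n) (g5 m '' T4 m n) := by
  refine disjHelp ?_
  rintro v hv w hw h
  rw [g4, g5] at h
  rcases Sym2.eq_iff.mp h with ⟨h1, h2⟩ | ⟨h1, h2⟩
  · have e := eU_inj hn hv hw h2
    rw [← e] at h1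
    exact eL_ne_eR_self hm v h1
  · exact eU_ne_eL hm hn hw h1.symm

lemma d46 (hm : 4 ≤ m) (hn : 4 ≤ n) : Disjoint (g4 m '' T4 m n) (g6 m '' T6 m n) := by
  refine disjHelp ?_
  rintro v hv w hw h
  rw [g4, g6] at h
  rcases Sym2.eq_iff.mp h with ⟨h1, h2⟩ | ⟨h1, h2⟩
  · exact eU_ne_eL hm hn hw.1 h1.symm
  · exact eD_ne_eL hm hw.2 h1.symm

lemma d56 (hm : 4 ≤ m) (hn : 4 ≤ n) : Disjoint (g5 m '' T4 m n) (g6 m '' T6 m n) := by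
  refine disjHelp ?_
  rintro v hv w hw h
  rw [g5, g6] at h
  rcases Sym2.eq_iff.mp h with ⟨h1, h2⟩ | ⟨h1, h2⟩
  · exact eU_ne_eR hm hn hw.1 h1.symm
  · exact eD_ne_eR hm hw.2 h1.symm

lemma inj1 (hm : 4 ≤ m) : (T1 m n).InjOn (g1 m) := by
  intro v _ w _ h
  rw [g1, g1] at h
  rcases Sym2.eq_iff.mp h with ⟨h1, _⟩ | ⟨h1, h2⟩
  · exact eL_inj hm h1
  · rw [eL_eq_eR] at h1 h2
    have e1 := eR_inj hm h1
    have e2 := eR_inj hm h2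
    have c1 : v.1 - 1 = w.1 := congrArg Prod.fst e1
    have c2 : v.1 = w.1 - 1 := congrArg Prod.fst e2
    exact ((two_ne hm) (by linear_combination c2 - c1)).elim

lemma inj2 (hm : 4 ≤ m) : (T2 m n).InjOn (g2 m) := by
  intro v hv w hw h
  rw [g2, g2] at h
  rcases Sym2.eq_iff.mp h with ⟨_, h2⟩ | ⟨h1, _⟩
  · exact eD_inj hv hw h2
  · exact ((eD_ne_eL hm hw h1.symm)).elim

lemma inj3 (hm : 4 ≤ m) : (T2 m n).InjOn (g3 m) := by
  intro v hv w hw h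
  rw [g3, g3] at h
  rcases Sym2.eq_iff.mp h with ⟨_, h2⟩ | ⟨h1, _⟩
  · exact eD_inj hv hw h2
  · exact ((eD_ne_eR hm hw h1.symm)).elim

lemma inj4 (hm : 4 ≤ m) (hn : 4 ≤ n) : (T4 m n).InjOn (g4 m) := by
  intro v hv w hw h
  rw [g4, g4] at h
  rcases Sym2.eq_iff.mp h with ⟨_, h2⟩ | ⟨h1, _⟩
  · exact eU_inj hn hv hw h2
  · exact ((eU_ne_eL hm hn hw h1.symm)).elim

lemma inj5 (hm : 4 ≤ m) (hn : 4 ≤ n) : (T4 m n).InjOn (g5 m) := by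
  intro v hv w hw h
  rw [g5, g5] at h
  rcases Sym2.eq_iff.mp h with ⟨_, h2⟩ | ⟨h1, _⟩
  · exact eU_inj hn hv hw h2
  · exact ((eU_ne_eR hm hn hw h1.symm)).elim

lemma inj6 (hn : 4 ≤ n) : (T6 m n).InjOn (g6 m) := by
  intro v hv w hw h
  rw [g6, g6] at h
  rcases Sym2.eq_iff.mp h with ⟨h1, _⟩ | ⟨h1, h2⟩
  · exact eU_inj hn hv.1 hw.1 h1
  · exfalso
    have e1 := eU_ne_eD hn hv.1 hw.2 h1
    have e2 := eU_ne_eD hn hw.1 hv.2 h2.symm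
    have r1 : w.2.1 = v.2.1 - 1 := congrArg (fun p => p.2.1) e1
    have r2 : v.2.1 = w.2.1 - 1 := congrArg (fun p => p.2.1) e2
    have hv0 : v.2.1 ≠ 0 := hv.1
    omega

lemma row_sum4 {M : Type*} [AddCommMonoid M] (g : ℕ → M) (t : ℕ) (ht : 4 ≤ t) (Q : M)
    (hmid : ∀ j, 1 < j → j < t - 2 → g j = Q) :
    ∑ j ∈ Finset.range t, g j = g 0 + g 1 + g (t - 2) + g (t - 1) + (t - 4) • Q := by
  obtain ⟨k, rfl⟩ : ∃ k, t = k + 4 := ⟨t - 4, by omega⟩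
  have e1 : k + 4 = (k + 3) + 1 := by omega
  have e2 : k + 3 = (k + 2) + 1 := by omega
  rw [e1, Finset.sum_range_succ, e2, Finset.sum_range_succ,
    Finset.sum_range_succ', Finset.sum_range_succ']
  rw [Finset.sum_congr rfl (fun j hj => hmid (j + 1 + 1) (by omega)
    (by simp only [Finset.mem_range] at hj; omega))]
  rw [Finset.sum_const, Finset.card_range]
  have e3 : k + 4 - 2 = k + 2 := by omega
  have e4 : k + 4 - 1 = k + 3 := by omega
  have e5 : k + 4 - 4 = k := by omega
  rw [e3, e4, e5]
  have e6 : (0 : ℕ) + 1 = 1 := rfl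
  rw [e6]
  abel

lemma prod_sum {M : Type*} [AddCommMonoid M] [NeZero (m - 1)] (f : V m n → M) (g : ℕ → M)
    (h : ∀ v : V m n, f v = g v.2.1) :
    ∑ v : V m n, f v = (m - 1) • ∑ j ∈ Finset.range n, g j := by
  calc ∑ v : V m n, f v = ∑ v : V m n, g v.2.1 := Finset.sum_congr rfl (fun v _ => h v)
    _ = ∑ _c : ZMod (m - 1), ∑ r : Fin n, g r.1 := by rw [Fintype.sum_prod_type]
    _ = ∑ _c : ZMod (m - 1), ∑ j ∈ Finset.range n, g j :=
        Finset.sum_congr rfl (fun c _ => Fin.sum_univ_eq_sum_range g n)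
    _ = (m - 1) • ∑ j ∈ Finset.range n, g j := by
        rw [Finset.sum_const, Finset.card_univ, ZMod.card]


lemma Feval1 (hm : 4 ≤ m) (hn : 4 ≤ n) (v : V m n) :
    F m n (g1 m v) = if v.2.1 = 0 ∨ v.2.1 = n - 1 then
      (X 0 : MvPolynomial (Fin 2) ℤ) ^ 4 * X 1 ^ 4 else X 0 ^ 6 * X 1 ^ 6 := by
  rw [g1, F, Sym2.lift_mk]
  dsimp only
  rw [D_eL hm hn, D_eR hm hn]
  by_cases hb : v.2.1 = 0 ∨ v.2.1 = n - 1
  · simp only [if_pos hb]; norm_num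
  · simp only [if_neg hb]; norm_num

lemma Feval2 (hm : 4 ≤ m) (hn : 4 ≤ n) {v : V m n} (h : v.2.1 ≠ n - 1) :
    F m n (g2 m v) = if v.2.1 = 0 then (X 0 : MvPolynomial (Fin 2) ℤ) ^ 4 * X 1 ^ 5
      else if v.2.1 = n - 2 then X 0 ^ 5 * X 1 ^ 6 else X 0 ^ 6 * X 1 ^ 6 := by
  rw [g2, F, Sym2.lift_mk]
  dsimp only
  rw [D_eL hm hn, D_eD hm hn h]
  have hr := v.2.2
  by_cases h0 : v.2.1 = 0
  · rw [if_pos (show v.2.1 = 0 ∨ v.2.1 = n - 1 from Or.inl h0),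
      if_pos (show v.2.1 = 0 ∨ v.2.1 = n - 2 from Or.inl h0), if_pos h0]
    norm_num
  · by_cases h2 : v.2.1 = n - 2
    · rw [if_neg (show ¬(v.2.1 = 0 ∨ v.2.1 = n - 1) by omega),
        if_pos (show v.2.1 = 0 ∨ v.2.1 = n - 2 from Or.inr h2), if_neg h0, if_pos h2]
      norm_num
    · rw [if_neg (show ¬(v.2.1 = 0 ∨ v.2.1 = n - 1) by omega),
        if_neg (show ¬(v.2.1 = 0 ∨ v.2.1 = n - 2) by omega), if_neg h0, if_neg h2]
      norm_num

lemma Feval3 (hm : 4 ≤ m) (hn : 4 ≤ n) {v : V m n} (h : v.2.1 ≠ n - 1) :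
    F m n (g3 m v) = if v.2.1 = 0 then (X 0 : MvPolynomial (Fin 2) ℤ) ^ 4 * X 1 ^ 5
      else if v.2.1 = n - 2 then X 0 ^ 5 * X 1 ^ 6 else X 0 ^ 6 * X 1 ^ 6 := by
  rw [g3, F, Sym2.lift_mk]
  dsimp only
  rw [D_eR hm hn, D_eD hm hn h]
  have hr := v.2.2
  by_cases h0 : v.2.1 = 0
  · rw [if_pos (show v.2.1 = 0 ∨ v.2.1 = n - 1 from Or.inl h0),
      if_pos (show v.2.1 = 0 ∨ v.2.1 = n - 2 from Or.inl h0), if_pos h0]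
    norm_num
  · by_cases h2 : v.2.1 = n - 2
    · rw [if_neg (show ¬(v.2.1 = 0 ∨ v.2.1 = n - 1) by omega),
        if_pos (show v.2.1 = 0 ∨ v.2.1 = n - 2 from Or.inr h2), if_neg h0, if_pos h2]
      norm_num
    · rw [if_neg (show ¬(v.2.1 = 0 ∨ v.2.1 = n - 1) by omega),
        if_neg (show ¬(v.2.1 = 0 ∨ v.2.1 = n - 2) by omega), if_neg h0, if_neg h2]
      norm_num

lemma Feval4 (hm : 4 ≤ m) (hn : 4 ≤ n) {v : V m n} (h : v.2.1 ≠ 0) :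
    F m n (g4 m v) = if v.2.1 = 1 then (X 0 : MvPolynomial (Fin 2) ℤ) ^ 5 * X 1 ^ 6
      else if v.2.1 = n - 1 then X 0 ^ 4 * X 1 ^ 5 else X 0 ^ 6 * X 1 ^ 6 := by
  rw [g4, F, Sym2.lift_mk]
  dsimp only
  rw [D_eL hm hn, D_eU hm hn h]
  have hr := v.2.2
  by_cases h1 : v.2.1 = 1
  · rw [if_neg (show ¬(v.2.1 = 0 ∨ v.2.1 = n - 1) by omega),
      if_pos (show v.2.1 = 1 ∨ v.2.1 = n - 1 from Or.inl h1), if_pos h1]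
    norm_num
  · by_cases h2 : v.2.1 = n - 1
    · rw [if_pos (show v.2.1 = 0 ∨ v.2.1 = n - 1 from Or.inr h2),
        if_pos (show v.2.1 = 1 ∨ v.2.1 = n - 1 from Or.inr h2), if_neg h1, if_pos h2]
      norm_num
    · rw [if_neg (show ¬(v.2.1 = 0 ∨ v.2.1 = n - 1) by omega),
        if_neg (show ¬(v.2.1 = 1 ∨ v.2.1 = n - 1) by omega), if_neg h1, if_neg h2]
      norm_num

lemma Feval5 (hm : 4 ≤ m) (hn : 4 ≤ n) {v : V m n} (h : v.2.1 ≠ 0) :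
    F m n (g5 m v) = if v.2.1 = 1 then (X 0 : MvPolynomial (Fin 2) ℤ) ^ 5 * X 1 ^ 6
      else if v.2.1 = n - 1 then X 0 ^ 4 * X 1 ^ 5 else X 0 ^ 6 * X 1 ^ 6 := by
  rw [g5, F, Sym2.lift_mk]
  dsimp only
  rw [D_eR hm hn, D_eU hm hn h]
  have hr := v.2.2
  by_cases h1 : v.2.1 = 1
  · rw [if_neg (show ¬(v.2.1 = 0 ∨ v.2.1 = n - 1) by omega),
      if_pos (show v.2.1 = 1 ∨ v.2.1 = n - 1 from Or.inl h1), if_pos h1]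
    norm_num
  · by_cases h2 : v.2.1 = n - 1
    · rw [if_pos (show v.2.1 = 0 ∨ v.2.1 = n - 1 from Or.inr h2),
        if_pos (show v.2.1 = 1 ∨ v.2.1 = n - 1 from Or.inr h2), if_neg h1, if_pos h2]
      norm_num
    · rw [if_neg (show ¬(v.2.1 = 0 ∨ v.2.1 = n - 1) by omega),
        if_neg (show ¬(v.2.1 = 1 ∨ v.2.1 = n - 1) by omega), if_neg h1, if_neg h2]
      norm_num

lemma Feval6 (hm : 4 ≤ m) (hn : 4 ≤ n) {v : V m n} (h0 : v.2.1 ≠ 0) (h1 : v.2.1 ≠ n - 1) :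
    F m n (g6 m v) = if v.2.1 = 1 ∨ v.2.1 = n - 2 then
      (X 0 : MvPolynomial (Fin 2) ℤ) ^ 5 * X 1 ^ 6 else X 0 ^ 6 * X 1 ^ 6 := by
  rw [g6, F, Sym2.lift_mk]
  dsimp only
  rw [D_eU hm hn h0, D_eD hm hn h1]
  have hr := v.2.2
  by_cases hv1 : v.2.1 = 1
  · rw [if_pos (show v.2.1 = 1 ∨ v.2.1 = n - 1 from Or.inl hv1),
      if_neg (show ¬(v.2.1 = 0 ∨ v.2.1 = n - 2) by omega),
      if_pos (show v.2.1 = 1 ∨ v.2.1 = n - 2 from Or.inl hv1)]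
    norm_num
  · by_cases hv2 : v.2.1 = n - 2
    · rw [if_neg (show ¬(v.2.1 = 1 ∨ v.2.1 = n - 1) by omega),
        if_pos (show v.2.1 = 0 ∨ v.2.1 = n - 2 from Or.inr hv2),
        if_pos (show v.2.1 = 1 ∨ v.2.1 = n - 2 from Or.inr hv2)]
      norm_num
    · rw [if_neg (show ¬(v.2.1 = 1 ∨ v.2.1 = n - 1) by omega),
        if_neg (show ¬(v.2.1 = 0 ∨ v.2.1 = n - 2) by omega),
        if_neg (show ¬(v.2.1 = 1 ∨ v.2.1 = n - 2) by omega)]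
      norm_num

lemma sum1 (hm : 4 ≤ m) (hn : 4 ≤ n) [NeZero (m - 1)] :
    ∑ᶠ v ∈ T1 m n, F m n (g1 m v) =
      (m - 1) • ((X 0 : MvPolynomial (Fin 2) ℤ) ^ 4 * X 1 ^ 4 + X 0 ^ 6 * X 1 ^ 6 +
        X 0 ^ 6 * X 1 ^ 6 + X 0 ^ 4 * X 1 ^ 4 + (n - 4) • (X 0 ^ 6 * X 1 ^ 6)) := by
  have hT : T1 m n = ↑(Finset.univ : Finset (V m n)) := by simp [T1]
  rw [hT, finsum_mem_coe_finset]
  rw [prod_sum (fun v => F m n (g1 m v))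
    (fun j => if j = 0 ∨ j = n - 1 then (X 0 : MvPolynomial (Fin 2) ℤ) ^ 4 * X 1 ^ 4
      else X 0 ^ 6 * X 1 ^ 6) (fun v => Feval1 hm hn v)]
  rw [row_sum4 _ n hn _ (fun j hj1 hj2 => if_neg (by omega))]
  rw [if_pos (show (0 : ℕ) = 0 ∨ (0 : ℕ) = n - 1 from Or.inl rfl),
    if_neg (show ¬((1 : ℕ) = 0 ∨ (1 : ℕ) = n - 1) by omega),
    if_neg (show ¬(n - 2 = 0 ∨ n - 2 = n - 1) by omega),
    if_pos (show n - 1 = 0 ∨ n - 1 = n - 1 from Or.inr rfl)]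

lemma sum2 (hm : 4 ≤ m) (hn : 4 ≤ n) [NeZero (m - 1)] :
    ∑ᶠ v ∈ T2 m n, F m n (g2 m v) =
      (m - 1) • ((X 0 : MvPolynomial (Fin 2) ℤ) ^ 4 * X 1 ^ 5 + X 0 ^ 6 * X 1 ^ 6 +
        X 0 ^ 5 * X 1 ^ 6 + 0 + (n - 4) • (X 0 ^ 6 * X 1 ^ 6)) := by
  classical
  have hT : T2 m n = ↑(Finset.univ.filter (fun v : V m n => v.2.1 ≠ n - 1)) := by
    ext v; simp [T2]
  rw [hT, finsum_mem_coe_finset, Finset.sum_filter]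
  rw [prod_sum (fun v => if v.2.1 ≠ n - 1 then F m n (g2 m v) else 0)
    (fun j => if j ≠ n - 1 then (if j = 0 then (X 0 : MvPolynomial (Fin 2) ℤ) ^ 4 * X 1 ^ 5
      else if j = n - 2 then X 0 ^ 5 * X 1 ^ 6 else X 0 ^ 6 * X 1 ^ 6) else 0)
    (fun v => by
      by_cases hc : v.2.1 ≠ n - 1
      · rw [if_pos hc, if_pos hc, Feval2 hm hn hc]
      · rw [if_neg hc, if_neg hc])]
  rw [row_sum4 _ n hn _ (fun j hj1 hj2 => by
    rw [if_pos (show j ≠ n - 1 by omega), if_neg (show ¬j = 0 by omega),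
      if_neg (show ¬j = n - 2 by omega)])]
  rw [if_pos (show (0 : ℕ) ≠ n - 1 by omega), if_pos rfl,
    if_pos (show (1 : ℕ) ≠ n - 1 by omega),
    if_neg (show ¬(1 : ℕ) = 0 by omega), if_neg (show ¬(1 : ℕ) = n - 2 by omega),
    if_pos (show n - 2 ≠ n - 1 by omega), if_neg (show ¬n - 2 = 0 by omega), if_pos rfl,
    if_neg (show ¬n - 1 ≠ n - 1 by omega)]

lemma sum3 (hm : 4 ≤ m) (hn : 4 ≤ n) [NeZero (m - 1)] :
    ∑ᶠ v ∈ T2 m n, F m n (g3 m v) =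
      (m - 1) • ((X 0 : MvPolynomial (Fin 2) ℤ) ^ 4 * X 1 ^ 5 + X 0 ^ 6 * X 1 ^ 6 +
        X 0 ^ 5 * X 1 ^ 6 + 0 + (n - 4) • (X 0 ^ 6 * X 1 ^ 6)) := by
  classical
  have hT : T2 m n = ↑(Finset.univ.filter (fun v : V m n => v.2.1 ≠ n - 1)) := by
    ext v; simp [T2]
  rw [hT, finsum_mem_coe_finset, Finset.sum_filter]
  rw [prod_sum (fun v => if v.2.1 ≠ n - 1 then F m n (g3 m v) else 0)
    (fun j => if j ≠ n - 1 then (if j = 0 then (X 0 : MvPolynomial (Fin 2) ℤ) ^ 4 * X 1 ^ 5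
      else if j = n - 2 then X 0 ^ 5 * X 1 ^ 6 else X 0 ^ 6 * X 1 ^ 6) else 0)
    (fun v => by
      by_cases hc : v.2.1 ≠ n - 1
      · rw [if_pos hc, if_pos hc, Feval3 hm hn hc]
      · rw [if_neg hc, if_neg hc])]
  rw [row_sum4 _ n hn _ (fun j hj1 hj2 => by
    rw [if_pos (show j ≠ n - 1 by omega), if_neg (show ¬j = 0 by omega),
      if_neg (show ¬j = n - 2 by omega)])]
  rw [if_pos (show (0 : ℕ) ≠ n - 1 by omega), if_pos rfl,
    if_pos (show (1 : ℕ) ≠ n - 1 by omega),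
    if_neg (show ¬(1 : ℕ) = 0 by omega), if_neg (show ¬(1 : ℕ) = n - 2 by omega),
    if_pos (show n - 2 ≠ n - 1 by omega), if_neg (show ¬n - 2 = 0 by omega), if_pos rfl,
    if_neg (show ¬n - 1 ≠ n - 1 by omega)]

lemma sum4 (hm : 4 ≤ m) (hn : 4 ≤ n) [NeZero (m - 1)] :
    ∑ᶠ v ∈ T4 m n, F m n (g4 m v) =
      (m - 1) • ((0 : MvPolynomial (Fin 2) ℤ) + X 0 ^ 5 * X 1 ^ 6 + X 0 ^ 6 * X 1 ^ 6 +
        X 0 ^ 4 * X 1 ^ 5 + (n - 4) • (X 0 ^ 6 * X 1 ^ 6)) := by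
  classical
  have hT : T4 m n = ↑(Finset.univ.filter (fun v : V m n => v.2.1 ≠ 0)) := by
    ext v; simp [T4]
  rw [hT, finsum_mem_coe_finset, Finset.sum_filter]
  rw [prod_sum (fun v => if v.2.1 ≠ 0 then F m n (g4 m v) else 0)
    (fun j => if j ≠ 0 then (if j = 1 then (X 0 : MvPolynomial (Fin 2) ℤ) ^ 5 * X 1 ^ 6
      else if j = n - 1 then X 0 ^ 4 * X 1 ^ 5 else X 0 ^ 6 * X 1 ^ 6) else 0)
    (fun v => by
      by_cases hc : v.2.1 ≠ 0
      · rw [if_pos hc, if_pos hc, Feval4 hm hn hc]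
      · rw [if_neg hc, if_neg hc])]
  rw [row_sum4 _ n hn _ (fun j hj1 hj2 => by
    rw [if_pos (show j ≠ 0 by omega), if_neg (show ¬j = 1 by omega),
      if_neg (show ¬j = n - 1 by omega)])]
  rw [if_neg (show ¬(0 : ℕ) ≠ 0 by omega),
    if_pos (show (1 : ℕ) ≠ 0 by omega), if_pos rfl,
    if_pos (show n - 2 ≠ 0 by omega), if_neg (show ¬n - 2 = 1 by omega),
    if_neg (show ¬n - 2 = n - 1 by omega),
    if_pos (show n - 1 ≠ 0 by omega), if_neg (show ¬n - 1 = 1 by omega), if_pos rfl]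

lemma sum5 (hm : 4 ≤ m) (hn : 4 ≤ n) [NeZero (m - 1)] :
    ∑ᶠ v ∈ T4 m n, F m n (g5 m v) =
      (m - 1) • ((0 : MvPolynomial (Fin 2) ℤ) + X 0 ^ 5 * X 1 ^ 6 + X 0 ^ 6 * X 1 ^ 6 +
        X 0 ^ 4 * X 1 ^ 5 + (n - 4) • (X 0 ^ 6 * X 1 ^ 6)) := by
  classical
  have hT : T4 m n = ↑(Finset.univ.filter (fun v : V m n => v.2.1 ≠ 0)) := by
    ext v; simp [T4]
  rw [hT, finsum_mem_coe_finset, Finset.sum_filter]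
  rw [prod_sum (fun v => if v.2.1 ≠ 0 then F m n (g5 m v) else 0)
    (fun j => if j ≠ 0 then (if j = 1 then (X 0 : MvPolynomial (Fin 2) ℤ) ^ 5 * X 1 ^ 6
      else if j = n - 1 then X 0 ^ 4 * X 1 ^ 5 else X 0 ^ 6 * X 1 ^ 6) else 0)
    (fun v => by
      by_cases hc : v.2.1 ≠ 0
      · rw [if_pos hc, if_pos hc, Feval5 hm hn hc]
      · rw [if_neg hc, if_neg hc])]
  rw [row_sum4 _ n hn _ (fun j hj1 hj2 => by
    rw [if_pos (show j ≠ 0 by omega), if_neg (show ¬j = 1 by omega),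
      if_neg (show ¬j = n - 1 by omega)])]
  rw [if_neg (show ¬(0 : ℕ) ≠ 0 by omega),
    if_pos (show (1 : ℕ) ≠ 0 by omega), if_pos rfl,
    if_pos (show n - 2 ≠ 0 by omega), if_neg (show ¬n - 2 = 1 by omega),
    if_neg (show ¬n - 2 = n - 1 by omega),
    if_pos (show n - 1 ≠ 0 by omega), if_neg (show ¬n - 1 = 1 by omega), if_pos rfl]

lemma sum6 (hm : 4 ≤ m) (hn : 4 ≤ n) [NeZero (m - 1)] :
    ∑ᶠ v ∈ T6 m n, F m n (g6 m v) =
      (m - 1) • ((0 : MvPolynomial (Fin 2) ℤ) + X 0 ^ 5 * X 1 ^ 6 + X 0 ^ 5 * X 1 ^ 6 +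
        0 + (n - 4) • (X 0 ^ 6 * X 1 ^ 6)) := by
  classical
  have hT : T6 m n = ↑(Finset.univ.filter (fun v : V m n => v.2.1 ≠ 0 ∧ v.2.1 ≠ n - 1)) := by
    ext v; simp [T6]
  rw [hT, finsum_mem_coe_finset, Finset.sum_filter]
  rw [prod_sum (fun v => if v.2.1 ≠ 0 ∧ v.2.1 ≠ n - 1 then F m n (g6 m v) else 0)
    (fun j => if j ≠ 0 ∧ j ≠ n - 1 then
      (if j = 1 ∨ j = n - 2 then (X 0 : MvPolynomial (Fin 2) ℤ) ^ 5 * X 1 ^ 6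
        else X 0 ^ 6 * X 1 ^ 6) else 0)
    (fun v => by
      by_cases hc : v.2.1 ≠ 0 ∧ v.2.1 ≠ n - 1
      · rw [if_pos hc, if_pos hc, Feval6 hm hn hc.1 hc.2]
      · rw [if_neg hc, if_neg hc])]
  rw [row_sum4 _ n hn _ (fun j hj1 hj2 => by
    rw [if_pos (show j ≠ 0 ∧ j ≠ n - 1 by omega),
      if_neg (show ¬(j = 1 ∨ j = n - 2) by omega)])]
  rw [if_neg (show ¬((0 : ℕ) ≠ 0 ∧ (0 : ℕ) ≠ n - 1) by omega),
    if_pos (show (1 : ℕ) ≠ 0 ∧ (1 : ℕ) ≠ n - 1 by omega),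
    if_pos (show (1 : ℕ) = 1 ∨ (1 : ℕ) = n - 2 from Or.inl rfl),
    if_pos (show n - 2 ≠ 0 ∧ n - 2 ≠ n - 1 by omega),
    if_pos (show n - 2 = 1 ∨ n - 2 = n - 2 from Or.inr rfl),
    if_neg (show ¬(n - 1 ≠ 0 ∧ n - 1 ≠ n - 1) by omega)]

end GMLAux

open MvPolynomial in
/-- The `M`-polynomial of `L(M_{m,n})` (`m, n ≥ 4`) is
`2(m−1)x⁴y⁴ + 4(m−1)x⁴y⁵ + 6(m−1)x⁵y⁶ + 6(m−1)(n−3)x⁶y⁶`. -/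
theorem gml_line_mpoly (m n : ℕ) (hm : 4 ≤ m) (hn : 4 ≤ n) :
    MPoly ((GML m n).lineGraph)
      = C (2 * ((m : ℤ) - 1)) * X 0 ^ 4 * X 1 ^ 4
        + C (4 * ((m : ℤ) - 1)) * X 0 ^ 4 * X 1 ^ 5
        + C (6 * ((m : ℤ) - 1)) * X 0 ^ 5 * X 1 ^ 6
        + C (6 * ((m : ℤ) - 1) * ((n : ℤ) - 3)) * X 0 ^ 6 * X 1 ^ 6 := by
  haveI : NeZero (m - 1) := ⟨by omega⟩
  classical
  have hd1 : Disjoint (GMLAux.g1 m '' GMLAux.T1 m n)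
      (GMLAux.g2 m '' GMLAux.T2 m n ∪ (GMLAux.g3 m '' GMLAux.T2 m n ∪
        (GMLAux.g4 m '' GMLAux.T4 m n ∪ (GMLAux.g5 m '' GMLAux.T4 m n ∪
          GMLAux.g6 m '' GMLAux.T6 m n)))) :=
    Set.disjoint_union_right.mpr ⟨GMLAux.d12 hm, Set.disjoint_union_right.mpr
      ⟨GMLAux.d13 hm, Set.disjoint_union_right.mpr ⟨GMLAux.d14 hm hn,
        Set.disjoint_union_right.mpr ⟨GMLAux.d15 hm hn, GMLAux.d16 hm hn⟩⟩⟩⟩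
  have hd2 : Disjoint (GMLAux.g2 m '' GMLAux.T2 m n)
      (GMLAux.g3 m '' GMLAux.T2 m n ∪ (GMLAux.g4 m '' GMLAux.T4 m n ∪
        (GMLAux.g5 m '' GMLAux.T4 m n ∪ GMLAux.g6 m '' GMLAux.T6 m n))) :=
    Set.disjoint_union_right.mpr ⟨GMLAux.d23 hm, Set.disjoint_union_right.mpr
      ⟨GMLAux.d24 hm hn, Set.disjoint_union_right.mpr ⟨GMLAux.d25 hm hn, GMLAux.d26 hm hn⟩⟩⟩
  have hd3 : Disjoint (GMLAux.g3 m '' GMLAux.T2 m n)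
      (GMLAux.g4 m '' GMLAux.T4 m n ∪ (GMLAux.g5 m '' GMLAux.T4 m n ∪
        GMLAux.g6 m '' GMLAux.T6 m n)) :=
    Set.disjoint_union_right.mpr ⟨GMLAux.d34 hm hn, Set.disjoint_union_right.mpr
      ⟨GMLAux.d35 hm hn, GMLAux.d36 hm hn⟩⟩
  have hd4 : Disjoint (GMLAux.g4 m '' GMLAux.T4 m n)
      (GMLAux.g5 m '' GMLAux.T4 m n ∪ GMLAux.g6 m '' GMLAux.T6 m n) :=
    Set.disjoint_union_right.mpr ⟨GMLAux.d45 hm hn, GMLAux.d46 hm hn⟩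
  have hd5 : Disjoint (GMLAux.g5 m '' GMLAux.T4 m n) (GMLAux.g6 m '' GMLAux.T6 m n) :=
    GMLAux.d56 hm hn
  rw [GMLAux.MPoly_eq hm, GMLAux.S_eq hm hn,
    finsum_mem_union hd1 (Set.toFinite _) (Set.toFinite _),
    finsum_mem_union hd2 (Set.toFinite _) (Set.toFinite _),
    finsum_mem_union hd3 (Set.toFinite _) (Set.toFinite _),
    finsum_mem_union hd4 (Set.toFinite _) (Set.toFinite _),
    finsum_mem_union hd5 (Set.toFinite _) (Set.toFinite _),
    finsum_mem_image (GMLAux.inj1 hm), finsum_mem_image (GMLAux.inj2 hm),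
    finsum_mem_image (GMLAux.inj3 hm), finsum_mem_image (GMLAux.inj4 hm hn),
    finsum_mem_image (GMLAux.inj5 hm hn), finsum_mem_image (GMLAux.inj6 hn),
    GMLAux.sum1 hm hn, GMLAux.sum2 hm hn, GMLAux.sum3 hm hn, GMLAux.sum4 hm hn,
    GMLAux.sum5 hm hn, GMLAux.sum6 hm hn]
  have hm1 : ((m - 1 : ℕ) : MvPolynomial (Fin 2) ℤ) = C ((m : ℤ) - 1) := by
    rw [← MvPolynomial.C_eq_coe_nat]
    exact congrArg C (by omega)
  have hn4 : ((n - 4 : ℕ) : MvPolynomial (Fin 2) ℤ) = C ((n : ℤ) - 4) := by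
    rw [← MvPolynomial.C_eq_coe_nat]
    exact congrArg C (by omega)
  simp only [nsmul_eq_mul, hm1, hn4]
  simp only [map_sub, map_mul, map_one, map_ofNat, map_natCast]
  ring
end

section
/- For m, n ≥ 4, the first Zagreb index of the line graph of the generalized Möbius ladder satisfies M₁(L(M_{m,n})) = 16(m−1) + 36(m−1) + 66(m−1) + 72(m−1)(n−3) = 2(m−1)(36n − 49). -/
open Finset SimpleGraph

section facts
variable {m n : ℕ}

lemma zlast (hm : 4 ≤ m) : ((m - 2 : ℕ) : ZMod (m - 1)) = -1 := by
  have h1 : m - 2 = (m - 1) - 1 := by omega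
  rw [h1, Nat.cast_sub (by omega : 1 ≤ m - 1), ZMod.natCast_self, Nat.cast_one, zero_sub]

lemma zone (hm : 4 ≤ m) : (1 : ZMod (m - 1)) ≠ 0 := by
  have h := (ZMod.natCast_eq_zero_iff 1 (m - 1)).not.mpr
    (fun h => by have := Nat.le_of_dvd one_pos h; omega)
  simpa using h

lemma ztwo (hm : 4 ≤ m) : (2 : ZMod (m - 1)) ≠ 0 := by
  have h := (ZMod.natCast_eq_zero_iff 2 (m - 1)).not.mpr
    (fun h => by have := Nat.le_of_dvd (by norm_num) h; omega)
  simpa using h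

lemma zc_add_one {c : ZMod (m - 1)} (hm : 4 ≤ m) : c + 1 ≠ c := by
  intro h
  exact zone hm (by linear_combination h)

lemma zc_sub_one {c : ZMod (m - 1)} (hm : 4 ≤ m) : c - 1 ≠ c := by
  intro h
  exact zone hm (by linear_combination -h)

lemma zc_two {c : ZMod (m - 1)} (hm : 4 ≤ m) : c + 1 ≠ c - 1 := by
  intro h
  exact ztwo hm (by linear_combination h)

/-- outgoing horizontal row -/
def orow (c : ZMod (m - 1)) (r : Fin n) : Fin n := if c = -1 then r.rev else r
/-- incoming horizontal row -/
def irow (c : ZMod (m - 1)) (r : Fin n) : Fin n := if c = 0 then r.rev else r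

lemma gml_adj_iff (hm : 4 ≤ m) (c : ZMod (m - 1)) (r : Fin n) (w : ZMod (m - 1) × Fin n) :
    (GML m n).Adj (c, r) w ↔
      (w.1 = c ∧ (w.2.val = r.val + 1 ∨ w.2.val + 1 = r.val)) ∨
      (w.1 = c + 1 ∧ w.2 = orow c r) ∨
      (w.1 = c - 1 ∧ w.2 = irow c r) := by
  obtain ⟨d, s⟩ := w
  have hrev : ∀ x : Fin n, (Fin.rev x).val = n - (x.val + 1) := fun x => Fin.val_rev x
  have hr := r.is_lt
  have hs := s.is_lt
  rw [GML, SimpleGraph.fromRel_adj, gmlRel, gmlRel, zlast hm]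
  dsimp only
  constructor
  · rintro ⟨hne, (⟨ha, hb⟩ | ⟨ha, hb, hc2⟩ | ⟨ha, hb, hc2⟩) |
      (⟨ha, hb⟩ | ⟨ha, hb, hc2⟩ | ⟨ha, hb, hc2⟩)⟩
    · exact Or.inl ⟨ha.symm, Or.inl hb.symm⟩
    · exact Or.inr (Or.inl ⟨hb, by rw [orow, if_neg ha, ← hc2]⟩)
    · refine Or.inr (Or.inl ⟨by rw [hb, ha]; ring, ?_⟩)
      rw [orow, if_pos ha]
      apply Fin.ext
      rw [hrev]
      omega
    · exact Or.inl ⟨ha, Or.inr hb⟩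
    · refine Or.inr (Or.inr ⟨by rw [hb]; ring, ?_⟩)
      have hc0 : c ≠ 0 := by
        intro hcc
        rw [hcc] at hb
        exact ha (by linear_combination -hb)
      rw [irow, if_neg hc0, hc2]
    · refine Or.inr (Or.inr ⟨by rw [hb, ha]; ring, ?_⟩)
      rw [irow, if_pos hb]
      apply Fin.ext
      rw [hrev]
      omega
  · rintro (⟨h1, h2 | h2⟩ | ⟨h1, h2⟩ | ⟨h1, h2⟩)
    · subst h1
      refine ⟨fun heq => ?_, Or.inl (Or.inl ⟨rfl, by omega⟩)⟩
      have := congrArg (fun p : ZMod (m - 1) × Fin n => p.2.val) heq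
      simp only at this
      omega
    · subst h1
      refine ⟨fun heq => ?_, Or.inr (Or.inl ⟨rfl, by omega⟩)⟩
      have := congrArg (fun p : ZMod (m - 1) × Fin n => p.2.val) heq
      simp only at this
      omega
    · subst h1; subst h2
      refine ⟨fun heq => ?_, ?_⟩
      · have := congrArg (fun p : ZMod (m - 1) × Fin n => p.1) heq
        simp only at this
        exact zc_add_one hm this.symm
      · by_cases hc : c = -1
        · refine Or.inl (Or.inr (Or.inr ⟨hc, by rw [hc]; ring, ?_⟩))
          rw [orow, if_pos hc, hrev]
          omega
        · exact Or.inl (Or.inr (Or.inl ⟨hc, rfl, by rw [orow, if_neg hc]⟩))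
    · subst h1; subst h2
      refine ⟨fun heq => ?_, ?_⟩
      · have := congrArg (fun p : ZMod (m - 1) × Fin n => p.1) heq
        simp only at this
        exact zc_sub_one hm this.symm
      · by_cases hc : c = 0
        · refine Or.inr (Or.inr (Or.inr ⟨by rw [hc]; ring, hc, ?_⟩))
          rw [irow, if_pos hc, hrev]
          omega
        · refine Or.inr (Or.inr (Or.inl ⟨?_, by ring, by rw [irow, if_neg hc]⟩))
          intro hcontra
          exact hc (by linear_combination hcontra)
end facts

section deg
variable {m n : ℕ}

lemma gml_ndeg (hm : 4 ≤ m) (hn : 4 ≤ n) (v : ZMod (m - 1) × Fin n) :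
    ((GML m n).neighborSet v).ncard = if v.2.val = 0 ∨ v.2.val = n - 1 then 3 else 4 := by
  haveI : NeZero (m - 1) := ⟨by omega⟩
  obtain ⟨c, r⟩ := v
  have hr := r.is_lt
  have hco : c ≠ c + 1 := fun h => zc_add_one hm h.symm
  have hci : c ≠ c - 1 := fun h => zc_sub_one hm h.symm
  have hoi : c + 1 ≠ c - 1 := zc_two hm
  by_cases h0 : r.val = 0
  · have hne : ¬(r.val = n - 1) := by omega
    have key : (GML m n).neighborSet (c, r) =
        {(c, (⟨1, by omega⟩ : Fin n)), (c + 1, orow c r), (c - 1, irow c r)} := by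
      ext ⟨d, s⟩
      rw [SimpleGraph.mem_neighborSet, gml_adj_iff hm]
      simp only [Set.mem_insert_iff, Set.mem_singleton_iff, Prod.mk.injEq, Fin.ext_iff]
      constructor
      · rintro (⟨hd, h | h⟩ | ⟨hd, hs⟩ | ⟨hd, hs⟩)
        · exact Or.inl ⟨hd, by omega⟩
        · omega
        · exact Or.inr (Or.inl ⟨hd, hs⟩)
        · exact Or.inr (Or.inr ⟨hd, hs⟩)
      · rintro (⟨hd, hs⟩ | ⟨hd, hs⟩ | ⟨hd, hs⟩)
        · exact Or.inl ⟨hd, Or.inl (by omega)⟩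
        · exact Or.inr (Or.inl ⟨hd, hs⟩)
        · exact Or.inr (Or.inr ⟨hd, hs⟩)
    rw [if_pos (Or.inl h0), key, Set.ncard_insert_of_notMem, Set.ncard_insert_of_notMem,
      Set.ncard_singleton]
    · simp only [Set.mem_singleton_iff, Prod.mk.injEq, not_and]
      intro h; exact absurd h hoi
    · simp only [Set.mem_insert_iff, Set.mem_singleton_iff, Prod.mk.injEq, not_or, not_and]
      exact ⟨fun h => absurd h hco, fun h => absurd h hci⟩
  · by_cases h1 : r.val = n - 1
    · have key : (GML m n).neighborSet (c, r) =
          {(c, (⟨n - 2, by omega⟩ : Fin n)), (c + 1, orow c r), (c - 1, irow c r)} := by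
        ext ⟨d, s⟩
        rw [SimpleGraph.mem_neighborSet, gml_adj_iff hm]
        simp only [Set.mem_insert_iff, Set.mem_singleton_iff, Prod.mk.injEq, Fin.ext_iff]
        have hs' : ∀ t : Fin n, t.val < n := fun t => t.is_lt
        constructor
        · rintro (⟨hd, h | h⟩ | ⟨hd, hs⟩ | ⟨hd, hs⟩)
          · have := s.is_lt; omega
          · exact Or.inl ⟨hd, by omega⟩
          · exact Or.inr (Or.inl ⟨hd, hs⟩)
          · exact Or.inr (Or.inr ⟨hd, hs⟩)
        · rintro (⟨hd, hs⟩ | ⟨hd, hs⟩ | ⟨hd, hs⟩)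
          · exact Or.inl ⟨hd, Or.inr (by omega)⟩
          · exact Or.inr (Or.inl ⟨hd, hs⟩)
          · exact Or.inr (Or.inr ⟨hd, hs⟩)
      rw [if_pos (Or.inr h1), key, Set.ncard_insert_of_notMem, Set.ncard_insert_of_notMem,
        Set.ncard_singleton]
      · simp only [Set.mem_singleton_iff, Prod.mk.injEq, not_and]
        intro h; exact absurd h hoi
      · simp only [Set.mem_insert_iff, Set.mem_singleton_iff, Prod.mk.injEq, not_or, not_and]
        exact ⟨fun h => absurd h hco, fun h => absurd h hci⟩
    · have key : (GML m n).neighborSet (c, r) =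
          {(c, (⟨r.val + 1, by omega⟩ : Fin n)), (c, (⟨r.val - 1, by omega⟩ : Fin n)),
            (c + 1, orow c r), (c - 1, irow c r)} := by
        ext ⟨d, s⟩
        rw [SimpleGraph.mem_neighborSet, gml_adj_iff hm]
        simp only [Set.mem_insert_iff, Set.mem_singleton_iff, Prod.mk.injEq, Fin.ext_iff]
        constructor
        · rintro (⟨hd, h | h⟩ | ⟨hd, hs⟩ | ⟨hd, hs⟩)
          · exact Or.inl ⟨hd, by omega⟩
          · exact Or.inr (Or.inl ⟨hd, by omega⟩)
          · exact Or.inr (Or.inr (Or.inl ⟨hd, hs⟩))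
          · exact Or.inr (Or.inr (Or.inr ⟨hd, hs⟩))
        · rintro (⟨hd, hs⟩ | ⟨hd, hs⟩ | ⟨hd, hs⟩ | ⟨hd, hs⟩)
          · exact Or.inl ⟨hd, Or.inl (by omega)⟩
          · exact Or.inl ⟨hd, Or.inr (by omega)⟩
          · exact Or.inr (Or.inl ⟨hd, hs⟩)
          · exact Or.inr (Or.inr ⟨hd, hs⟩)
      rw [if_neg (by dsimp only; omega), key, Set.ncard_insert_of_notMem, Set.ncard_insert_of_notMem,
        Set.ncard_insert_of_notMem, Set.ncard_singleton]
      · simp only [Set.mem_singleton_iff, Prod.mk.injEq, not_and]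
        intro h; exact absurd h hoi
      · simp only [Set.mem_insert_iff, Set.mem_singleton_iff, Prod.mk.injEq, not_or, not_and]
        exact ⟨fun h => absurd h hco, fun h => absurd h hci⟩
      · simp only [Set.mem_insert_iff, Set.mem_singleton_iff, Prod.mk.injEq, not_or, not_and,
          Fin.ext_iff]
        refine ⟨fun _ => by omega, fun h => absurd h hco, fun h => absurd h hci⟩
end deg

section edges
variable {m n : ℕ}

lemma rel_ne (hm : 4 ≤ m) {v w : ZMod (m - 1) × Fin n} (h : gmlRel m n v w) : v ≠ w := by
  rw [gmlRel, zlast hm] at h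
  rintro rfl
  rcases h with ⟨_, h2⟩ | ⟨h1, h2, _⟩ | ⟨h1, h2, _⟩
  · omega
  · exact zc_add_one hm h2.symm
  · exact zone hm (by linear_combination h1 - h2)

lemma rel_asymm (hm : 4 ≤ m) {v w : ZMod (m - 1) × Fin n} (h : gmlRel m n v w)
    (h' : gmlRel m n w v) : False := by
  rw [gmlRel, zlast hm] at h h'
  rcases h with ⟨a1, a2⟩ | ⟨a1, a2, a3⟩ | ⟨a1, a2, a3⟩ <;>
    rcases h' with ⟨b1, b2⟩ | ⟨b1, b2, b3⟩ | ⟨b1, b2, b3⟩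
  · omega
  · exact zone hm (by linear_combination a1 - b2)
  · exact zone hm (by linear_combination a1 + b1 - b2)
  · exact zone hm (by linear_combination b1 - a2)
  · exact ztwo hm (by linear_combination -a2 - b2)
  · exact ztwo hm (by linear_combination -a2 + b1 - b2)
  · exact zone hm (by linear_combination a1 - a2 + b1)
  · exact ztwo hm (by linear_combination a1 - a2 - b2)
  · exact zone hm (by linear_combination b1 - a2)

lemma rel_adj (hm : 4 ≤ m) {v w : ZMod (m - 1) × Fin n} (h : gmlRel m n v w) :
    (GML m n).Adj v w := by
  rw [GML, SimpleGraph.fromRel_adj]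
  exact ⟨rel_ne hm h, Or.inl h⟩
end edges

lemma ndeg_eq_degree {V : Type*} [Fintype V] (G : SimpleGraph V) [DecidableRel G.Adj] (v : V) :
    ndeg G v = G.degree v := by
  rw [ndeg, ← card_neighborFinset_eq_degree, neighborFinset_def, Set.ncard_eq_toFinset_card']

lemma sum_lift_edges {V : Type*} [Fintype V] (G : SimpleGraph V) [DecidableRel G.Adj]
    (f : V → ℤ) :
    ∑ e ∈ G.edgeFinset, Sym2.lift ⟨fun a b => f a + f b, fun a b => by ring⟩ e
      = ∑ v, (G.degree v : ℤ) * f v := by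
  classical
  have h1 : ∑ d : G.Dart, f d.fst
      = ∑ e ∈ G.edgeFinset, Sym2.lift ⟨fun a b => f a + f b, fun a b => by ring⟩ e := by
    rw [← Finset.sum_fiberwise_of_maps_to (s := (Finset.univ : Finset G.Dart))
      (t := G.edgeFinset) (g := Dart.edge)
      (fun d _ => by rw [mem_edgeFinset]; exact d.edge_mem) (f := fun d : G.Dart => f d.fst)]
    refine Finset.sum_congr rfl fun e he => ?_
    rw [mem_edgeFinset] at he
    induction e with
    | h u v =>
      let d : G.Dart := ⟨(u, v), he⟩
      have hfib : ({d' : G.Dart | d'.edge = d.edge} : Finset _) = {d, d.symm} := d.edge_fiber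
      have : (Finset.univ.filter fun d' : G.Dart => d'.edge = s(u, v)) = {d, d.symm} := by
        convert hfib using 2
        all_goals exact Iff.rfl
      rw [this, Finset.sum_pair d.symm_ne.symm]
      simp [d, Dart.symm]
  have h2 : ∑ d : G.Dart, f d.fst = ∑ v, (G.degree v : ℤ) * f v := by
    rw [← Finset.sum_fiberwise_of_maps_to (g := fun d : G.Dart => d.fst)
      (fun d _ => Finset.mem_univ _)]
    refine Finset.sum_congr rfl fun v _ => ?_
    have : ∀ d ∈ Finset.univ.filter (fun d : G.Dart => d.fst = v), f d.fst = f v := by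
      intro d hd; rw [Finset.mem_filter] at hd; rw [hd.2]
    rw [Finset.sum_congr rfl this, Finset.sum_const, nsmul_eq_mul]
    congr 1
    exact_mod_cast G.dart_fst_fiber_card_eq_degree v
  rw [← h1, h2]

lemma ndeg_lineGraph {V : Type*} [Finite V] (G : SimpleGraph V) {u v : V} (h : G.Adj u v) :
    ndeg G.lineGraph (⟨s(u, v), h⟩ : G.edgeSet) = (ndeg G u - 1) + (ndeg G v - 1) := by
  classical
  have hval : (Subtype.val '' (G.lineGraph.neighborSet ⟨s(u, v), h⟩) : Set (Sym2 V))
      = (fun w => s(u, w)) '' (G.neighborSet u \ {v})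
        ∪ (fun w => s(v, w)) '' (G.neighborSet v \ {u}) := by
    ext t
    simp only [Set.mem_image, Set.mem_union, Set.mem_diff, Set.mem_singleton_iff]
    constructor
    · rintro ⟨f, hf, rfl⟩
      obtain ⟨hne, x, hx1, hx2⟩ := lineGraph_adj_iff_exists.mp hf
      rw [Sym2.mem_iff] at hx1
      have hxf : x ∈ (f : Sym2 V) := hx2
      rcases hx1 with rfl | rfl
      · left
        refine ⟨Sym2.Mem.other hxf, ⟨?_, ?_⟩, (Sym2.other_spec hxf)⟩
        · have := f.2
          rw [← Sym2.other_spec hxf, mem_edgeSet] at this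
          exact this
        · intro heq
          apply hne
          apply Subtype.ext
          rw [← Sym2.other_spec hxf, heq]
      · right
        refine ⟨Sym2.Mem.other hxf, ⟨?_, ?_⟩, (Sym2.other_spec hxf)⟩
        · have := f.2
          rw [← Sym2.other_spec hxf, mem_edgeSet] at this
          exact this
        · intro heq
          apply hne
          apply Subtype.ext
          rw [← Sym2.other_spec hxf, heq]
          exact Sym2.eq_swap
    · rintro (⟨w, ⟨hw, hwv⟩, rfl⟩ | ⟨w, ⟨hw, hwu⟩, rfl⟩)
      · refine ⟨⟨s(u, w), (mem_edgeSet G).mpr hw⟩, lineGraph_adj_iff_exists.mpr ⟨?_, u, ?_, ?_⟩, rfl⟩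
        · intro heq
          have : s(u, v) = s(u, w) := Subtype.mk_eq_mk.mp heq
          exact hwv (Sym2.congr_right.mp this).symm
        · simp
        · simp
      · refine ⟨⟨s(v, w), (mem_edgeSet G).mpr hw⟩, lineGraph_adj_iff_exists.mpr ⟨?_, v, ?_, ?_⟩, rfl⟩
        · intro heq
          have : s(u, v) = s(v, w) := Subtype.mk_eq_mk.mp heq
          rw [Sym2.eq_swap] at this
          exact hwu (Sym2.congr_right.mp this).symm
        · simp
        · simp
  have hinj_u : Set.InjOn (fun w => s(u, w)) (G.neighborSet u \ {v}) :=
    fun a _ b _ hab => Sym2.congr_right.mp hab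
  have hinj_v : Set.InjOn (fun w => s(v, w)) (G.neighborSet v \ {u}) :=
    fun a _ b _ hab => Sym2.congr_right.mp hab
  have hdisj : Disjoint ((fun w => s(u, w)) '' (G.neighborSet u \ {v}))
      ((fun w => s(v, w)) '' (G.neighborSet v \ {u})) := by
    rw [Set.disjoint_left]
    rintro t ht hm
    simp only [Set.mem_image, Set.mem_diff, Set.mem_singleton_iff] at ht hm
    obtain ⟨a, ⟨_, hav⟩, rfl⟩ := ht
    obtain ⟨b, ⟨_, hbu⟩, hba⟩ := hm
    rw [Sym2.eq_iff] at hba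
    rcases hba with ⟨h1, _⟩ | ⟨h1, _⟩
    · exact G.ne_of_adj h h1.symm
    · exact hav h1.symm
  have h1 : ndeg G.lineGraph (⟨s(u, v), h⟩ : G.edgeSet)
      = (Subtype.val '' (G.lineGraph.neighborSet ⟨s(u, v), h⟩) : Set (Sym2 V)).ncard := by
    rw [ndeg, Set.ncard_image_of_injective _ Subtype.val_injective]
  rw [h1, hval, Set.ncard_union_eq hdisj (Set.toFinite _) (Set.toFinite _),
    Set.ncard_image_of_injOn hinj_u, Set.ncard_image_of_injOn hinj_v,
    Set.ncard_diff_singleton_of_mem ((G.mem_neighborSet u v).mpr h),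
    Set.ncard_diff_singleton_of_mem ((G.mem_neighborSet v u).mpr h.symm)]
  rfl


section moreaux
variable {m n : ℕ}

lemma gml_fromRel_adj (v w : ZMod (m - 1) × Fin n) :
    (GML m n).Adj v w ↔ v ≠ w ∧ (gmlRel m n v w ∨ gmlRel m n w v) := by
  rw [GML]
  exact SimpleGraph.fromRel_adj _ _ _

lemma gml_rel_vert (hm : 4 ≤ m) {v w : ZMod (m - 1) × Fin n} :
    gmlRel m n v w ↔
      (v.1 = w.1 ∧ v.2.val + 1 = w.2.val) ∨
      (v.1 ≠ -1 ∧ w.1 = v.1 + 1 ∧ v.2 = w.2) ∨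
      (v.1 = -1 ∧ w.1 = 0 ∧ v.2.val + w.2.val = n - 1) := by
  rw [gmlRel, zlast hm]

lemma orow_val_bdd (hn : 4 ≤ n) (c : ZMod (m - 1)) (r : Fin n) :
    ((orow c r).val = 0 ∨ (orow c r).val = n - 1) ↔ (r.val = 0 ∨ r.val = n - 1) := by
  have hr := r.is_lt
  rw [orow]
  split_ifs with h
  · rw [Fin.val_rev]
    omega
  · exact Iff.rfl

lemma sum_if_aux (N a b : ℕ) (x : ℤ) (haN : a < N) (hbN : b < N) (hab : a ≠ b) :
    ∑ i ∈ Finset.range N, ((36 : ℤ) + (if i = a then x else 0) + (if i = b then x else 0))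
      = 36 * N + 2 * x := by
  rw [Finset.sum_add_distrib, Finset.sum_add_distrib, Finset.sum_const,
    Finset.sum_ite_eq' (Finset.range N) a (fun _ => x),
    Finset.sum_ite_eq' (Finset.range N) b (fun _ => x),
    if_pos (Finset.mem_range.mpr haN), if_pos (Finset.mem_range.mpr hbN), Finset.card_range]
  ring
end moreaux

/-- degree weight -/
def DD (m n : ℕ) (x : ZMod (m - 1) × Fin n) : ℤ := if x.2.val = 0 ∨ x.2.val = n - 1 then 3 else 4

def QQ (m n : ℕ) : Sym2 (ZMod (m - 1) × Fin n) → ℤ :=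
  Sym2.lift ⟨fun a b => (DD m n a + DD m n b - 2) ^ 2, fun a b => by ring⟩

def fv (m n : ℕ) (q : ZMod (m - 1) × Fin (n - 1)) :
    (ZMod (m - 1) × Fin n) × (ZMod (m - 1) × Fin n) :=
  ((q.1, ⟨q.2.val, by have := q.2.is_lt; omega⟩),
   (q.1, ⟨q.2.val + 1, by have := q.2.is_lt; omega⟩))

def fh (m n : ℕ) (q : ZMod (m - 1) × Fin n) :
    (ZMod (m - 1) × Fin n) × (ZMod (m - 1) × Fin n) :=
  ((q.1, q.2), (q.1 + 1, orow q.1 q.2))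

/-- First Zagreb index of `L(M_{m,n})` (`m, n ≥ 4`):
`M₁ = 16(m−1) + 36(m−1) + 66(m−1) + 72(m−1)(n−3) = 2(m−1)(36n − 49)`. -/
theorem gml_line_zagreb1 (m n : ℕ) (hm : 4 ≤ m) (hn : 4 ≤ n) :
    (∑ᶠ E ∈ ((GML m n).lineGraph).edgeSet, Sym2.lift ⟨fun e f => ((ndeg (GML m n).lineGraph e : ℤ) + (ndeg (GML m n).lineGraph f : ℤ)),
      fun e f => by simp only []; ring⟩ E)
        = 16 * ((m : ℤ) - 1) + 36 * ((m : ℤ) - 1) + 66 * ((m : ℤ) - 1)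
            + 72 * ((m : ℤ) - 1) * ((n : ℤ) - 3)
      ∧ 16 * ((m : ℤ) - 1) + 36 * ((m : ℤ) - 1) + 66 * ((m : ℤ) - 1)
            + 72 * ((m : ℤ) - 1) * ((n : ℤ) - 3)
        = 2 * ((m : ℤ) - 1) * (36 * n - 49) := by
  haveI : NeZero (m - 1) := ⟨by omega⟩
  classical
  refine ⟨?_, by push_cast; ring⟩
  set V := (ZMod (m - 1) × Fin n)
  set G := GML m n with hG
  letI : Fintype ↥G.edgeSet := Fintype.ofFinite _
  set L := G.lineGraph with hLdef
  letI : DecidableRel L.Adj := Classical.decRel _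
  -- Step 1: finsum to Finset sum, then degree-sum identity
  rw [show L.edgeSet = ↑(L.edgeFinset) from (SimpleGraph.coe_edgeFinset _).symm,
    finsum_mem_coe_finset]
  refine Eq.trans (sum_lift_edges L (fun e => (ndeg L e : ℤ))) ?_
  -- Step 2: pointwise line-degree value
  have hDL : ∀ e : ↥G.edgeSet, (L.degree e : ℤ) * (ndeg L e : ℤ) = QQ m n e.val := by
    rintro ⟨E, hE⟩
    revert hE
    refine Sym2.ind (fun u v => ?_) E
    intro hE
    have hadj : G.Adj u v := (SimpleGraph.mem_edgeSet G).mp hE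
    rw [← ndeg_eq_degree]
    have hval : ndeg L (⟨s(u, v), hE⟩ : ↥G.edgeSet) = (ndeg G u - 1) + (ndeg G v - 1) :=
      ndeg_lineGraph G hadj
    have h2u : ndeg G u = if u.2.val = 0 ∨ u.2.val = n - 1 then 3 else 4 := gml_ndeg hm hn u
    have h2v : ndeg G v = if v.2.val = 0 ∨ v.2.val = n - 1 then 3 else 4 := gml_ndeg hm hn v
    show ((ndeg L (⟨s(u, v), hE⟩ : ↥G.edgeSet) : ℤ)) * _ = QQ m n s(u, v)
    have hQuv : QQ m n s(u, v) = (DD m n u + DD m n v - 2) ^ 2 := by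
      simp [QQ]
    rw [hval, hQuv, DD, DD, h2u, h2v]
    split_ifs <;> norm_num
  refine Eq.trans (Finset.sum_congr rfl (fun e _ => hDL e)) ?_
  -- Step 3: sum over subtype to sum over edgeFinset
  refine Eq.trans (Finset.sum_subtype G.edgeFinset
    (fun x => SimpleGraph.mem_edgeFinset) (QQ m n)).symm ?_
  -- Step 4: edgeFinset as image of directed rel pairs
  have himg : G.edgeFinset
      = (Finset.univ.filter fun p : V × V => gmlRel m n p.1 p.2).image
          (fun p => s(p.1, p.2)) := by
    ext E
    simp only [mem_edgeFinset, Finset.mem_image, Finset.mem_filter, Finset.mem_univ, true_and]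
    constructor
    · intro hE
      revert hE
      refine Sym2.ind (fun u v => ?_) E
      intro hE
      have hadj : G.Adj u v := (SimpleGraph.mem_edgeSet G).mp hE
      rw [hG, gml_fromRel_adj] at hadj
      rcases hadj.2 with h | h
      · exact ⟨(u, v), h, rfl⟩
      · exact ⟨(v, u), h, Sym2.eq_swap⟩
    · rintro ⟨p, hp, rfl⟩
      exact (SimpleGraph.mem_edgeSet G).mpr (rel_adj hm hp)
  rw [himg, Finset.sum_image ?hinj]
  case hinj =>
    intro p hp q hq h
    simp only [Finset.mem_coe, Finset.mem_filter, Finset.mem_univ, true_and] at hp hq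
    rw [Sym2.eq_iff] at h
    obtain ⟨p1, p2⟩ := p
    obtain ⟨q1, q2⟩ := q
    dsimp only at h hp hq
    rcases h with ⟨h1, h2⟩ | ⟨h1, h2⟩
    · rw [h1, h2]
    · subst h1; subst h2
      exact absurd hq (fun hq' => rel_asymm hm hp hq')
  -- Step 5: split directed pairs into vertical and horizontal families
  have hsplit : (Finset.univ.filter fun p : V × V => gmlRel m n p.1 p.2)
      = ((Finset.univ : Finset (ZMod (m - 1) × Fin (n - 1))).image (fv m n))
        ∪ ((Finset.univ : Finset (ZMod (m - 1) × Fin n)).image (fh m n)) := by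
    ext p
    simp only [Finset.mem_filter, Finset.mem_univ, true_and, Finset.mem_union,
      Finset.mem_image, true_and]
    obtain ⟨⟨c, r⟩, ⟨d, s⟩⟩ := p
    have hr := r.is_lt
    have hs := s.is_lt
    constructor
    · intro hp
      rw [gml_rel_vert hm] at hp
      rcases hp with ⟨h1, h2⟩ | ⟨h1, h2, h3⟩ | ⟨h1, h2, h3⟩
      · dsimp only at h1 h2
        refine Or.inl ⟨(c, ⟨r.val, by omega⟩), ?_⟩
        simp only [fv, Prod.ext_iff, Fin.ext_iff]
        and_intros <;> first | trivial | exact h1 | exact h2 | omega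
      · dsimp only at h1 h2 h3
        refine Or.inr ⟨(c, r), ?_⟩
        simp only [fh, Prod.ext_iff, Fin.ext_iff]
        and_intros <;> first | trivial | exact h2.symm | simp [orow, h1, h3]
      · dsimp only at h1 h2 h3
        refine Or.inr ⟨(c, r), ?_⟩
        simp only [fh, Prod.ext_iff, Fin.ext_iff]
        and_intros <;> first | trivial | (rw [h1, h2]; try ring) | (simp [orow, h1, Fin.val_rev]; omega)
    · rintro (⟨q, hq⟩ | ⟨q, hq⟩) <;> rw [← hq]
      · rw [gml_rel_vert hm]
        exact Or.inl ⟨rfl, rfl⟩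
      · rw [gml_rel_vert hm]
        obtain ⟨c', r'⟩ := q
        by_cases hc : c' = -1
        · refine Or.inr (Or.inr ⟨hc, by simp [fh, hc], ?_⟩)
          simp only [fh, orow, if_pos hc, Fin.val_rev]
          have := r'.is_lt
          omega
        · exact Or.inr (Or.inl ⟨hc, rfl, by simp [fh, orow, if_neg hc]⟩)
  rw [hsplit, Finset.sum_union ?hdisj, Finset.sum_image ?hinjv, Finset.sum_image ?hinjh]
  case hdisj =>
    rw [Finset.disjoint_left]
    rintro a ha hb
    simp only [Finset.mem_image, Finset.mem_univ, true_and] at ha hb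
    obtain ⟨q, rfl⟩ := ha
    obtain ⟨q', hq'⟩ := hb
    have h1 : q'.1 + 1 = q.1 := congrArg (fun z => z.2.1) hq'
    have h2 : q'.1 = q.1 := congrArg (fun z => z.1.1) hq'
    rw [h2] at h1
    exact zc_add_one hm h1
  case hinjv =>
    intro q _ q' _ h
    have h1 : q.1 = q'.1 := congrArg (fun z => z.1.1) h
    have h2 : (q.2.val : ℕ) = q'.2.val := congrArg (fun z => z.1.2.val) h
    exact Prod.ext h1 (Fin.ext h2)
  case hinjh =>
    intro q _ q' _ h
    have : ((q.1, q.2) : ZMod (m - 1) × Fin n) = (q'.1, q'.2) := congrArg Prod.fst h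
    calc q = (q.1, q.2) := rfl
    _ = (q'.1, q'.2) := this
    _ = q' := rfl
  -- Step 6: evaluate the two sums
  have hver : ∀ q : ZMod (m - 1) × Fin (n - 1),
      QQ m n (s((fv m n q).1, (fv m n q).2))
        = 36 + (if q.2.val = 0 then (-11 : ℤ) else 0) + (if q.2.val = n - 2 then -11 else 0) := by
    intro q
    have hq := q.2.is_lt
    simp only [QQ, fv, Sym2.lift_mk, DD]
    split_ifs <;> (try simp only [false_or] at *) <;> first | omega | norm_num
  have hhor : ∀ q : ZMod (m - 1) × Fin n,
      QQ m n (s((fh m n q).1, (fh m n q).2))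
        = 36 + (if q.2.val = 0 then (-20 : ℤ) else 0) + (if q.2.val = n - 1 then -20 else 0) := by
    intro q
    have hq := q.2.is_lt
    simp only [QQ, fh, Sym2.lift_mk, DD]
    rw [if_congr (orow_val_bdd hn q.1 q.2) rfl rfl]
    split_ifs <;> (try simp only [false_or] at *) <;> first | omega | norm_num
  rw [Finset.sum_congr rfl (fun q _ => hver q), Finset.sum_congr rfl (fun q _ => hhor q)]
  rw [Fintype.sum_prod_type, Fintype.sum_prod_type]
  have hA : ∀ c : ZMod (m - 1),
      (∑ i : Fin (n - 1), ((36 : ℤ) + (if i.val = 0 then (-11 : ℤ) else 0)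
        + (if i.val = n - 2 then -11 else 0)))
      = 36 * ((n : ℤ) - 1) - 22 := by
    intro c
    rw [Fin.sum_univ_eq_sum_range
      (fun j => (36 : ℤ) + (if j = 0 then (-11 : ℤ) else 0) + (if j = n - 2 then -11 else 0))]
    rw [sum_if_aux (n - 1) 0 (n - 2) (-11) (by omega) (by omega) (by omega)]
    push_cast [Nat.cast_sub (by omega : 1 ≤ n)]
    ring
  have hB : (∑ i : Fin n, ((36 : ℤ) + (if i.val = 0 then (-20 : ℤ) else 0)
        + (if i.val = n - 1 then -20 else 0)))
      = 36 * (n : ℤ) - 40 := by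
    rw [Fin.sum_univ_eq_sum_range
      (fun j => (36 : ℤ) + (if j = 0 then (-20 : ℤ) else 0) + (if j = n - 1 then -20 else 0))]
    rw [sum_if_aux n 0 (n - 1) (-20) (by omega) (by omega) (by omega)]
    ring
  rw [Finset.sum_congr rfl (fun c _ => hA c), Finset.sum_congr rfl (fun c _ => hB)]
  rw [Finset.sum_const, Finset.sum_const, Finset.card_univ, ZMod.card, nsmul_eq_mul,
    nsmul_eq_mul]
  push_cast [Nat.cast_sub (by omega : 1 ≤ m)]
  ring
end
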